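/- arXiv:math/0608292 — 7 statements merged into one kernel-verified Lean document; each statement's English description precedes it below -/
import Mathlib

section
/- If x and y are nonzero quaternions whose images in SO_3(R) under the standard rotation homomorphism commute, then xy = yx or xy = -yx. -/
noncomputable def theta (x : Quaternion ℝ) : Matrix (Fin 3) (Fin 3) ℝ :=
  (x.re ^ 2 + x.imI ^ 2 + x.imJ ^ 2 + x.imK ^ 2)⁻¹ •
    !![x.re ^ 2 + x.imI ^ 2 - x.imJ ^ 2 - x.imK ^ 2,
         2 * (x.imI * x.imJ - x.re * x.imK), 2 * (x.imI * x.imK + x.re * x.imJ);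
       2 * (x.imI * x.imJ + x.re * x.imK),
         x.re ^ 2 - x.imI ^ 2 + x.imJ ^ 2 - x.imK ^ 2, 2 * (x.imJ * x.imK - x.re * x.imI);
       2 * (x.imI * x.imK - x.re * x.imJ), 2 * (x.imJ * x.imK + x.re * x.imI),
         x.re ^ 2 - x.imI ^ 2 - x.imJ ^ 2 + x.imK ^ 2]

/-
`theta` is multiplicative and its kernel consists of the real scalars. If `theta x` and `theta y`
commute then `theta (x * y) = theta (y * x)`, so `x * y = r * (y * x)` for some real `r`; since
`x * y` and `y * x` have the same norm, `r = ±1`.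
-/

open Quaternion

lemma theta_mul (x y : ℍ[ℝ]) : theta (x * y) = theta x * theta y := by
  have hN : (x * y).re ^ 2 + (x * y).imI ^ 2 + (x * y).imJ ^ 2 + (x * y).imK ^ 2 =
      (x.re ^ 2 + x.imI ^ 2 + x.imJ ^ 2 + x.imK ^ 2) *
        (y.re ^ 2 + y.imI ^ 2 + y.imJ ^ 2 + y.imK ^ 2) := by
    simp only [re_mul, imI_mul, imJ_mul, imK_mul]
    ring
  rw [theta, theta, theta, hN, mul_inv, Matrix.smul_mul, Matrix.mul_smul, smul_smul,
    Matrix.mul_fin_three]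
  congr 1
  ext i j
  fin_cases i <;> fin_cases j <;>
    · simp [re_mul, imI_mul, imJ_mul, imK_mul]
      ring

lemma theta_one : theta (1 : ℍ[ℝ]) = 1 := by
  ext i j
  fin_cases i <;> fin_cases j <;> simp [theta]

lemma coe_re_eq_of_theta_eq_one {z : ℍ[ℝ]} (h : theta z = 1) : (z.re : ℍ[ℝ]) = z := by
  have h00 := congrFun (congrFun h 0) 0
  have h11 := congrFun (congrFun h 1) 1
  simp only [theta, Matrix.smul_apply, Matrix.one_apply_eq, smul_eq_mul, Matrix.of_apply,
    Matrix.cons_val', Matrix.cons_val_zero, Matrix.cons_val_one, Matrix.empty_val',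
    Matrix.cons_val_fin_one] at h00 h11
  -- `theta 0 = 0` because the normalising factor is `0⁻¹ = 0`.
  have hN : z.re ^ 2 + z.imI ^ 2 + z.imJ ^ 2 + z.imK ^ 2 ≠ 0 := by
    rintro hN
    simp [hN] at h00
  field_simp at h00 h11
  have hJK : z.imJ ^ 2 + z.imK ^ 2 = 0 := by linarith
  have hIK : z.imI ^ 2 + z.imK ^ 2 = 0 := by linarith
  ext <;> simp <;> nlinarith [sq_nonneg z.imI, sq_nonneg z.imJ, sq_nonneg z.imK]

lemma exists_real_mul_of_theta_eq {a b : ℍ[ℝ]} (hb : b ≠ 0) (h : theta a = theta b) :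
    ∃ r : ℝ, a = r * b := by
  have hb_inv : theta b * theta b⁻¹ = 1 := by rw [← theta_mul, mul_inv_cancel₀ hb, theta_one]
  have hker : theta (a * b⁻¹) = 1 := by rw [theta_mul, h, hb_inv]
  exact ⟨(a * b⁻¹).re, by rw [coe_re_eq_of_theta_eq_one hker, inv_mul_cancel_right₀ hb]⟩

lemma eq_or_eq_neg_of_eq_real_mul {a b : ℍ[ℝ]} {r : ℝ} (hb : b ≠ 0) (hab : a = r * b)
    (hn : normSq a = normSq b) : a = b ∨ a = -b := by
  rw [hab, map_mul, normSq_coe] at hn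
  have hr : r ^ 2 = 1 := mul_right_cancel₀ (normSq_ne_zero.2 hb) (by rw [hn, one_mul])
  rcases sq_eq_one_iff.1 hr with rfl | rfl <;> simp [hab]

theorem theta_commute_imp (x y : Quaternion ℝ) (hx : x ≠ 0) (hy : y ≠ 0)
    (h : theta x * theta y = theta y * theta x) :
    x * y = y * x ∨ x * y = -(y * x) := by
  have hyx : y * x ≠ 0 := mul_ne_zero hy hx
  obtain ⟨r, hr⟩ := exists_real_mul_of_theta_eq (a := x * y) hyx
    (by rw [theta_mul, theta_mul, h])
  exact eq_or_eq_neg_of_eq_real_mul hyx hr (by rw [map_mul, map_mul, mul_comm])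
end

section
/- Let G1 × G2 be a subgroup of SO_3(R) with G1 and G2 nontrivial. If G1 × G2 is not abelian, then both G1 and G2 contain an element of order 2. -/
/-!
A nontrivial element `a` of SO(3) fixes an axis, which after conjugation is the first
coordinate axis, so that `a = rotX c s`. A rotation commuting with `a` preserves this axis: it
is either a rotation about the same axis or a half-turn about a perpendicular one, and the latter
commutes with `a` only if `a` is itself a half-turn. Rotations about a common axis commute.
Hence if `a` commutes with two elements `b`, `c` that do not commute with each other, then `a`
and one of `b`, `c` have order two. For `G₁ × G₂ ≤ SO(3)` with `G₁` nonabelian, take `a` the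
image of any nontrivial element of `G₂` and `b`, `c` the images of two noncommuting elements
of `G₁`.
-/

open Matrix

namespace Matrix

variable {n : Type*} [Fintype n] [DecidableEq n]

theorem exists_mulVec_eq_self_of_mem_specialOrthogonalGroup {K : Type*} [Field K] [NeZero (2 : K)]
    (hn : Odd (Fintype.card n)) {M : Matrix n n K} (hM : M ∈ specialOrthogonalGroup n K) :
    ∃ v ≠ 0, M *ᵥ v = v := by
  obtain ⟨hMo, hMd⟩ := mem_specialOrthogonalGroup_iff.mp hM
  rw [mem_orthogonalGroup_iff] at hMo
  have hdet : (M - 1).det = -(M - 1).det :=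
    calc (M - 1).det = (M * (1 - Mᵀ)).det := by rw [mul_sub, mul_one, hMo]
      _ = (1 - M)ᵀ.det := by rw [det_mul, hMd, one_mul, transpose_sub, transpose_one]
      _ = (-(M - 1)).det := by rw [det_transpose, neg_sub]
      _ = -(M - 1).det := by rw [det_neg, hn.neg_one_pow, neg_one_mul]
  have hdet0 : (M - 1).det = 0 :=
    (mul_eq_zero.mp (by linear_combination hdet : (2 : K) * (M - 1).det = 0)).resolve_left
      two_ne_zero
  obtain ⟨v, hv, hMv⟩ := exists_mulVec_eq_zero_iff.mpr hdet0
  exact ⟨v, hv, by rwa [sub_mulVec, one_mulVec, sub_eq_zero] at hMv⟩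

theorem exists_mem_specialOrthogonalGroup_mulVec_single_eq_smul (hn : Odd (Fintype.card n))
    (i : n) {v : n → ℝ} (hv : v ≠ 0) :
    ∃ P ∈ specialOrthogonalGroup n ℝ, ∃ c : ℝ, P *ᵥ Pi.single i 1 = c • v := by
  set w : EuclideanSpace ℝ n := WithLp.toLp 2 v
  have hw : w ≠ 0 := fun h => hv (by simpa [w] using congrArg WithLp.ofLp h)
  have hunit : Orthonormal ℝ (({i} : Set n).domRestrict fun _ => ‖w‖⁻¹ • w) :=
    orthonormal_subsingleton_iff.mpr fun _ => norm_smul_inv_norm hw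
  obtain ⟨b, hb⟩ := hunit.exists_orthonormalBasis_extension_of_card_eq (by simp)
  set P₀ := (EuclideanSpace.basisFun n ℝ).toBasis.toMatrix b
  have hP₀ : P₀ * P₀ᵀ = 1 := (mem_orthogonalGroup_iff n ℝ).mp
    ((EuclideanSpace.basisFun n ℝ).toMatrix_orthonormalBasis_mem_orthogonal b)
  have hP₀i : P₀ *ᵥ Pi.single i 1 = ‖w‖⁻¹ • v := by
    ext k
    simp [P₀, mulVec_single, Module.Basis.toMatrix_apply, hb i rfl, w]
  have hd : P₀.det = 1 ∨ P₀.det = -1 := by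
    simpa [Module.Basis.det_apply] using
      (EuclideanSpace.basisFun n ℝ).det_to_matrix_orthonormalBasis_real b
  -- `P₀` may have determinant `-1`; rescaling by `P₀.det = ±1` repairs this in odd dimension.
  refine ⟨P₀.det • P₀,
    mem_specialOrthogonalGroup_iff.mpr ⟨(mem_orthogonalGroup_iff n ℝ).mpr ?_, ?_⟩,
    P₀.det * ‖w‖⁻¹, ?_⟩
  · rw [transpose_smul, smul_mul_smul_comm, hP₀]
    rcases hd with h | h <;> simp [h]
  · rcases hd with h | h <;> simp [h, det_neg, hn.neg_one_pow]
  · rw [smul_mulVec, hP₀i, smul_smul]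



theorem exists_conj_mulVec_single_eq_single (hn : Odd (Fintype.card n))
    (a : specialOrthogonalGroup n ℝ) (i : n) :
    ∃ q : specialOrthogonalGroup n ℝ,
      ((q * a * q⁻¹ : specialOrthogonalGroup n ℝ) : Matrix n n ℝ) *ᵥ Pi.single i 1 =
        Pi.single i 1 := by
  obtain ⟨v, hv, hav⟩ := exists_mulVec_eq_self_of_mem_specialOrthogonalGroup hn a.prop
  obtain ⟨P, hP, c, hPc⟩ := exists_mem_specialOrthogonalGroup_mulVec_single_eq_smul hn i hv
  have hfix : (a : Matrix n n ℝ) *ᵥ (P *ᵥ Pi.single i 1) = P *ᵥ Pi.single i 1 := by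
    rw [hPc, mulVec_smul, hav]
  refine ⟨(⟨P, hP⟩ : specialOrthogonalGroup n ℝ)⁻¹, ?_⟩
  have hPP : star P * P = 1 := hP.1.1
  simp only [inv_inv, Submonoid.coe_mul]
  change (star P * (a : Matrix n n ℝ) * P) *ᵥ _ = _
  rw [← mulVec_mulVec, ← mulVec_mulVec, hfix, mulVec_mulVec, hPP, one_mulVec]

end Matrix

theorem eq_and_eq_neg_of_sq_add_sq_eq_one {a b c d : ℝ} (h₁ : a ^ 2 + b ^ 2 = 1)
    (h₂ : c ^ 2 + d ^ 2 = 1) (h : a * d - b * c = 1) : d = a ∧ c = -b := by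
  have hsq : (d - a) ^ 2 + (c + b) ^ 2 = 0 := by linear_combination h₁ + h₂ - 2 * h
  rw [add_eq_zero_iff_of_nonneg (sq_nonneg _) (sq_nonneg _), sq_eq_zero_iff, sq_eq_zero_iff,
    sub_eq_zero, add_eq_zero_iff_eq_neg] at hsq
  exact hsq

theorem eq_zero_of_rotation_fixed {c s x y : ℝ} (hcs : c ^ 2 + s ^ 2 = 1) (hc : c ≠ 1)
    (hx : c * x - s * y = x) (hy : s * x + c * y = y) : x = 0 ∧ y = 0 := by
  have h2c : 2 - 2 * c ≠ 0 := fun h => hc (by linarith)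
  constructor
  · refine (mul_eq_zero.mp ?_).resolve_left h2c
    linear_combination (c - 1) * hx + s * hy - x * hcs
  · refine (mul_eq_zero.mp ?_).resolve_left h2c
    linear_combination -s * hx + (c - 1) * hy - y * hcs

def rotX (c s : ℝ) : Matrix (Fin 3) (Fin 3) ℝ := !![1, 0, 0; 0, c, -s; 0, s, c]

/-- For `(p, q) = (cos θ, sin θ)`, the half-turn about the axis
`(0, cos (θ / 2), sin (θ / 2))`. -/
def halfTurnYZ (p q : ℝ) : Matrix (Fin 3) (Fin 3) ℝ := !![-1, 0, 0; 0, p, q; 0, q, -p]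

theorem rotX_mul_rotX (c s c' s' : ℝ) :
    rotX c s * rotX c' s' = rotX (c * c' - s * s') (s * c' + c * s') := by
  ext i j; fin_cases i <;> fin_cases j <;> simp [rotX] <;> ring

theorem commute_rotX (c s c' s' : ℝ) : Commute (rotX c s) (rotX c' s') := by
  rw [Commute, SemiconjBy, rotX_mul_rotX, rotX_mul_rotX]; ring_nf

theorem rotX_one_zero : rotX 1 0 = 1 := by
  ext i j; fin_cases i <;> fin_cases j <;> simp [rotX]

theorem halfTurnYZ_mul_self {p q : ℝ} (h : p ^ 2 + q ^ 2 = 1) :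
    halfTurnYZ p q * halfTurnYZ p q = 1 := by
  ext i j; fin_cases i <;> fin_cases j <;> simp [halfTurnYZ] <;> grind

theorem eq_zero_of_commute_rotX_halfTurnYZ {c s p q : ℝ} (h : p ^ 2 + q ^ 2 = 1)
    (hcomm : Commute (rotX c s) (halfTurnYZ p q)) : s = 0 := by
  have h11 : c * p - s * q = p * c + q * s := by
    simpa [rotX, halfTurnYZ, sub_eq_add_neg] using congrFun₂ hcomm.eq 1 1
  have h12 : c * q + s * p = -(p * s) + q * c := by
    simpa [rotX, halfTurnYZ] using congrFun₂ hcomm.eq 1 2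
  linear_combination p / 2 * h12 - q / 2 * h11 - s * h

section

variable {B : Matrix (Fin 3) (Fin 3) ℝ}

theorem rotX_or_halfTurnYZ_of_mem_specialOrthogonalGroup
    (hB : B ∈ specialOrthogonalGroup (Fin 3) ℝ)
    (h01 : B 0 1 = 0) (h02 : B 0 2 = 0) (h10 : B 1 0 = 0) (h20 : B 2 0 = 0) :
    (∃ c s, c ^ 2 + s ^ 2 = 1 ∧ B = rotX c s) ∨
      ∃ p q, p ^ 2 + q ^ 2 = 1 ∧ B = halfTurnYZ p q := by
  obtain ⟨hBo, hBd⟩ := mem_specialOrthogonalGroup_iff.mp hB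
  rw [mem_orthogonalGroup_iff] at hBo
  have o00 : B 0 0 = 1 ∨ B 0 0 = -1 := by
    simpa [mul_apply, Fin.sum_univ_three, h01, h02, ← sq] using congrFun₂ hBo 0 0
  have o11 : B 1 1 ^ 2 + B 1 2 ^ 2 = 1 := by
    simpa [mul_apply, Fin.sum_univ_three, h10, ← sq] using congrFun₂ hBo 1 1
  have o22 : B 2 1 ^ 2 + B 2 2 ^ 2 = 1 := by
    simpa [mul_apply, Fin.sum_univ_three, h20, ← sq] using congrFun₂ hBo 2 2
  rw [det_fin_three, h01, h02, h10, h20] at hBd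
  rcases o00 with h00 | h00
  · rw [h00] at hBd
    obtain ⟨h22, h21⟩ := eq_and_eq_neg_of_sq_add_sq_eq_one o11 o22 (by linear_combination hBd)
    refine .inl ⟨B 1 1, B 2 1, by rw [h21, neg_sq, o11], ?_⟩
    ext i j; fin_cases i <;> fin_cases j <;> simp [rotX, h00, h01, h02, h10, h20, h21, h22]
  · rw [h00] at hBd
    obtain ⟨h22, h21⟩ := eq_and_eq_neg_of_sq_add_sq_eq_one (c := -B 2 1) (d := -B 2 2) o11
      (by rw [neg_sq, neg_sq, o22]) (by linear_combination hBd)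
    refine .inr ⟨B 1 1, B 1 2, o11, ?_⟩
    ext i j; fin_cases i <;> fin_cases j <;> simp [halfTurnYZ, h00, h01, h02, h10, h20]
    all_goals linarith

theorem eq_rotX_of_mulVec_single_eq_single (hB : B ∈ specialOrthogonalGroup (Fin 3) ℝ)
    (hfix : B *ᵥ Pi.single 0 1 = Pi.single 0 1) :
    ∃ c s, c ^ 2 + s ^ 2 = 1 ∧ B = rotX c s := by
  have hcol (i : Fin 3) : B i 0 = Pi.single (M := fun _ => ℝ) 0 1 i := by
    simpa [mulVec_single] using congrFun hfix i
  have h00 : B 0 0 = 1 := by simpa using hcol 0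
  have h10 : B 1 0 = 0 := by simpa using hcol 1
  have h20 : B 2 0 = 0 := by simpa using hcol 2
  have o00 : 1 + B 0 1 ^ 2 + B 0 2 ^ 2 = 1 := by
    simpa [mul_apply, Fin.sum_univ_three, h00, ← sq] using
      congrFun₂ ((mem_orthogonalGroup_iff _ _).mp hB.1) 0 0
  have h01 : B 0 1 = 0 := by nlinarith
  have h02 : B 0 2 = 0 := by nlinarith
  refine (rotX_or_halfTurnYZ_of_mem_specialOrthogonalGroup hB h01 h02 h10 h20).resolve_right ?_
  rintro ⟨p, q, -, rfl⟩
  norm_num [halfTurnYZ] at h00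

theorem entries_eq_zero_of_commute_rotX {c s : ℝ} (hcs : c ^ 2 + s ^ 2 = 1) (hc : c ≠ 1)
    (hcomm : Commute (rotX c s) B) : B 0 1 = 0 ∧ B 0 2 = 0 ∧ B 1 0 = 0 ∧ B 2 0 = 0 := by
  have e01 : B 0 1 = B 0 1 * c + B 0 2 * s := by
    simpa [rotX, mul_apply, Fin.sum_univ_three] using congrFun₂ hcomm.eq 0 1
  have e02 : B 0 2 = -(B 0 1 * s) + B 0 2 * c := by
    simpa [rotX, mul_apply, Fin.sum_univ_three] using congrFun₂ hcomm.eq 0 2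
  have e10 : c * B 1 0 + -(s * B 2 0) = B 1 0 := by
    simpa [rotX, mul_apply, Fin.sum_univ_three] using congrFun₂ hcomm.eq 1 0
  have e20 : s * B 1 0 + c * B 2 0 = B 2 0 := by
    simpa [rotX, mul_apply, Fin.sum_univ_three] using congrFun₂ hcomm.eq 2 0
  obtain ⟨h01, h02⟩ := eq_zero_of_rotation_fixed (s := -s) (x := B 0 1) (y := B 0 2)
    (by rwa [neg_sq]) hc (by linear_combination -e01) (by linear_combination -e02)
  obtain ⟨h10, h20⟩ := eq_zero_of_rotation_fixed (x := B 1 0) (y := B 2 0) hcs hc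
    (by linear_combination e10) (by linear_combination e20)
  exact ⟨h01, h02, h10, h20⟩

theorem rotX_or_halfTurnYZ_of_commute_rotX {c s : ℝ} (hcs : c ^ 2 + s ^ 2 = 1) (hc : c ≠ 1)
    (hB : B ∈ specialOrthogonalGroup (Fin 3) ℝ) (hcomm : Commute (rotX c s) B) :
    (∃ c' s', B = rotX c' s') ∨ (s = 0 ∧ B * B = 1) := by
  obtain ⟨h01, h02, h10, h20⟩ := entries_eq_zero_of_commute_rotX hcs hc hcomm
  rcases rotX_or_halfTurnYZ_of_mem_specialOrthogonalGroup hB h01 h02 h10 h20 with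
    ⟨c', s', -, rfl⟩ | ⟨p, q, hpq, rfl⟩
  · exact .inl ⟨c', s', rfl⟩
  · exact .inr ⟨eq_zero_of_commute_rotX_halfTurnYZ hpq hcomm, halfTurnYZ_mul_self hpq⟩

end

local notation "SO₃" => specialOrthogonalGroup (Fin 3) ℝ

theorem sq_eq_one_of_commute_of_not_commute_of_mulVec_single {a b c : SO₃}
    (hfix : (a : Matrix (Fin 3) (Fin 3) ℝ) *ᵥ Pi.single 0 1 = Pi.single 0 1) (ha : a ≠ 1)
    (hab : Commute a b) (hac : Commute a c) (hbc : ¬Commute b c) :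
    a ^ 2 = 1 ∧ (b ^ 2 = 1 ∨ c ^ 2 = 1) := by
  obtain ⟨x, y, hxy, hax⟩ := eq_rotX_of_mulVec_single_eq_single a.prop hfix
  have hx : x ≠ 1 := by
    rintro rfl
    obtain rfl : y = 0 := by simpa using hxy
    exact ha (Subtype.ext (hax.trans rotX_one_zero))
  have hcases (d : SO₃) (had : Commute a d) :
      (∃ x' y', (d : Matrix (Fin 3) (Fin 3) ℝ) = rotX x' y') ∨ (y = 0 ∧ d ^ 2 = 1) := by
    refine (rotX_or_halfTurnYZ_of_commute_rotX hxy hx d.prop ?_).imp id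
      fun h => ⟨h.1, Subtype.ext (by simpa [pow_two] using h.2)⟩
    simpa [hax] using had.map (specialOrthogonalGroup (Fin 3) ℝ).subtype
  have ha2 (hy : y = 0) : a ^ 2 = 1 := by
    subst hy
    refine Subtype.ext ?_
    rw [pow_two, Submonoid.coe_mul, hax, rotX_mul_rotX, OneMemClass.coe_one, ← rotX_one_zero]
    congr 1
    · linear_combination hxy
    · ring
  rcases hcases b hab with ⟨xb, yb, hb⟩ | ⟨hy, hb⟩
  · rcases hcases c hac with ⟨xc, yc, hc⟩ | ⟨hy, hc⟩
    · refine absurd (Commute.of_map (f := (specialOrthogonalGroup (Fin 3) ℝ).subtype)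
        Subtype.val_injective ?_) hbc
      simpa [hb, hc] using commute_rotX xb yb xc yc
    · exact ⟨ha2 hy, .inr hc⟩
  · exact ⟨ha2 hy, .inl hb⟩

theorem sq_eq_one_of_commute_of_not_commute {a b c : SO₃} (ha : a ≠ 1)
    (hab : Commute a b) (hac : Commute a c) (hbc : ¬Commute b c) :
    a ^ 2 = 1 ∧ (b ^ 2 = 1 ∨ c ^ 2 = 1) := by
  obtain ⟨q, hq⟩ := exists_conj_mulVec_single_eq_single (by decide) a 0
  have := sq_eq_one_of_commute_of_not_commute_of_mulVec_single
    (a := MulAut.conj q a) (b := MulAut.conj q b) (c := MulAut.conj q c) hq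
    (by simpa using ha) (hab.map (MulAut.conj q)) (hac.map (MulAut.conj q))
    fun h => hbc (h.of_map (MulAut.conj q).injective)
  simpa only [← map_pow, MulEquiv.map_eq_one_iff] using this

theorem exists_sq_eq_one_of_injective_of_not_commute {G₁ G₂ : Type*} [Group G₁] [Group G₂]
    {φ : G₁ × G₂ →* SO₃} (hφ : Function.Injective φ) {x y : G₁} (hxy : ¬Commute x y)
    {g : G₂} (hg : g ≠ 1) :
    (∃ a : G₁, a ≠ 1 ∧ a ^ 2 = 1) ∧ (∃ b : G₂, b ≠ 1 ∧ b ^ 2 = 1) := by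
  have hcomm (u : G₁) : Commute (φ (1, g)) (φ (u, 1)) :=
    ((Commute.one_left u).prod (Commute.one_right g)).map φ
  have hxy' : ¬Commute (φ (x, 1)) (φ (y, 1)) := fun h =>
    hxy (Prod.commute_iff.mp (h.of_map hφ)).1
  have hsq {u : G₁ × G₂} (h : φ u ^ 2 = 1) : u.1 ^ 2 = 1 ∧ u.2 ^ 2 = 1 := by
    simpa [← map_pow, map_eq_one_iff φ hφ, Prod.ext_iff] using h
  obtain ⟨hg2, hx2 | hy2⟩ := sq_eq_one_of_commute_of_not_commute
    (by simpa [map_eq_one_iff φ hφ] using hg) (hcomm x) (hcomm y) hxy'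
  · exact ⟨⟨x, by rintro rfl; exact hxy (.one_left y), (hsq hx2).1⟩, g, hg, (hsq hg2).2⟩
  · exact ⟨⟨y, by rintro rfl; exact hxy (.one_right x), (hsq hy2).1⟩, g, hg, (hsq hg2).2⟩

theorem so3_direct_product_order_two (G₁ G₂ : Type*) [Group G₁] [Group G₂]
    (h₁ : ∃ g : G₁, g ≠ 1) (h₂ : ∃ g : G₂, g ≠ 1)
    (f : G₁ × G₂ →* Matrix (Fin 3) (Fin 3) ℝ)
    (hrange : ∀ g, f g ∈ Matrix.specialOrthogonalGroup (Fin 3) ℝ)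
    (hinj : Function.Injective f)
    (hnonab : ¬ ∀ a b : G₁ × G₂, a * b = b * a) :
    (∃ a : G₁, a ≠ 1 ∧ a ^ 2 = 1) ∧ (∃ b : G₂, b ≠ 1 ∧ b ^ 2 = 1) := by
  set φ := f.codRestrict _ hrange
  have hφ : Function.Injective φ := fun u v h => hinj (congrArg Subtype.val h)
  obtain ⟨⟨x₁, x₂⟩, ⟨y₁, y₂⟩, hxy⟩ : ∃ a b : G₁ × G₂, ¬Commute a b := by
    simpa [Commute, SemiconjBy] using hnonab
  by_cases hcomm₁ : Commute x₁ y₁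
  · have hcomm₂ : ¬Commute x₂ y₂ := fun h => hxy (hcomm₁.prod h)
    obtain ⟨g, hg⟩ := h₁
    exact (exists_sq_eq_one_of_injective_of_not_commute
      (φ := φ.comp (MulEquiv.prodComm (M := G₂) (N := G₁)).toMonoidHom)
      (hφ.comp (MulEquiv.prodComm (M := G₂) (N := G₁)).injective) hcomm₂ hg).symm
  · obtain ⟨g, hg⟩ := h₂
    exact exists_sq_eq_one_of_injective_of_not_commute hφ hcomm₁ hg
end

section
/- Any subgroup of SO_3(R) containing no element of order 2 is commutative transitive: if A, B, C are nonidentity elements of such a subgroup with AB = BA and AC = CA, then BC = CB. -/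
/-!
For a rotation `X` write `S = X - Xᵀ`. Rodrigues' formula expresses `X` as a polynomial in `S`
unless `tr X = -1`, and in that case `S² = 0`, so `S = 0` and `X` is a half-turn. Commuting
rotations have commuting skew parts, and the commutator of two skew `3 × 3` matrices is the skew
matrix of the cross product of their axial vectors. So if `A` is not an involution, `A - Aᵀ ≠ 0`
and the skew parts of `B` and `C` are multiples of it; as neither `B` nor `C` is a half-turn, both
lie in the commutative algebra `ℝ[A - Aᵀ]`.
-/

open Matrix

lemma exists_smul_eq_of_cross_eq_zero {F : Type*} [Field F] {v w : Fin 3 → F} (hv : v ≠ 0)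
    (h : v ⨯₃ w = 0) : ∃ c : F, c • v = w := by
  have := mt crossProduct_ne_zero_iff_linearIndependent.2 (not_not.2 h)
  simpa [LinearIndependent.pair_iff' hv] using this

namespace Matrix

section CrossMatrix

variable {R : Type*} [CommRing R]

/-- The matrix of `w ↦ v ⨯₃ w`. -/
def crossMatrix (v : Fin 3 → R) : Matrix (Fin 3) (Fin 3) R :=
  !![0, -v 2, v 1; v 2, 0, -v 0; -v 1, v 0, 0]

def axialVector (X : Matrix (Fin 3) (Fin 3) R) : Fin 3 → R :=
  ![X 2 1 - X 1 2, X 0 2 - X 2 0, X 1 0 - X 0 1]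

lemma crossMatrix_smul (c : R) (v : Fin 3 → R) : crossMatrix (c • v) = c • crossMatrix v := by
  ext i j
  fin_cases i <;> fin_cases j <;> simp [crossMatrix]

lemma crossMatrix_eq_zero_iff {v : Fin 3 → R} : crossMatrix v = 0 ↔ v = 0 := by
  refine ⟨fun h => ?_, fun h => ?_⟩
  · ext i
    fin_cases i
    · simpa [crossMatrix] using congrFun (congrFun h 2) 1
    · simpa [crossMatrix] using congrFun (congrFun h 0) 2
    · simpa [crossMatrix] using congrFun (congrFun h 1) 0
  · ext i j
    fin_cases i <;> fin_cases j <;> simp [crossMatrix, h]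

lemma crossMatrix_mul_sub_mul (v w : Fin 3 → R) :
    crossMatrix v * crossMatrix w - crossMatrix w * crossMatrix v = crossMatrix (v ⨯₃ w) := by
  ext i j
  fin_cases i <;> fin_cases j <;>
    simp [crossMatrix, cross_apply] <;> ring

lemma commute_crossMatrix_iff {v w : Fin 3 → R} :
    Commute (crossMatrix v) (crossMatrix w) ↔ v ⨯₃ w = 0 := by
  rw [commute_iff_eq, ← sub_eq_zero, crossMatrix_mul_sub_mul, crossMatrix_eq_zero_iff]

lemma crossMatrix_axialVector (X : Matrix (Fin 3) (Fin 3) R) :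
    crossMatrix (axialVector X) = X - Xᵀ := by
  ext i j
  fin_cases i <;> fin_cases j <;> simp [crossMatrix, axialVector]

end CrossMatrix

section Orthogonal

variable {n R : Type*} [Fintype n] [DecidableEq n] [CommRing R]

lemma commute_transpose_left_of_mem_orthogonalGroup {X Y : Matrix n n R}
    (hX : X ∈ orthogonalGroup n R) (h : Commute X Y) : Commute Xᵀ Y :=
  Commute.units_inv_left
    (u := ⟨X, Xᵀ, (mem_orthogonalGroup_iff _ _).1 hX, (mem_orthogonalGroup_iff' _ _).1 hX⟩) h

lemma commute_sub_transpose_of_mem_orthogonalGroup {X Y : Matrix n n R}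
    (hX : X ∈ orthogonalGroup n R) (hY : Y ∈ orthogonalGroup n R) (h : Commute X Y) :
    Commute (X - Xᵀ) (Y - Yᵀ) := by
  have hXtY := commute_transpose_left_of_mem_orthogonalGroup hX h
  have hXYt := (commute_transpose_left_of_mem_orthogonalGroup hY h.symm).symm
  have hXtYt := (commute_transpose_left_of_mem_orthogonalGroup hY hXtY.symm).symm
  exact (h.sub_right hXYt).sub_left (hXtY.sub_right hXtYt)

lemma mul_self_eq_one_of_transpose_eq {X : Matrix n n R} (hX : X ∈ orthogonalGroup n R)
    (h : Xᵀ = X) : X * X = 1 := by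
  simpa [h] using (mem_orthogonalGroup_iff _ _).1 hX

end Orthogonal

lemma eq_zero_of_transpose_eq_neg_of_mul_self_eq_zero {n : Type*} [Fintype n]
    {S : Matrix n n ℝ} (hS : Sᵀ = -S) (h : S * S = 0) : S = 0 := by
  rw [← conjTranspose_mul_self_eq_zero, conjTranspose_eq_transpose_of_trivial, hS, neg_mul, h,
    neg_zero]

section SpecialOrthogonalFinThree

variable {R : Type*} [CommRing R]

lemma cayley_hamilton_fin_three (X : Matrix (Fin 3) (Fin 3) R) :
    X * X * X = X.trace • (X * X) - X.adjugate.trace • X + X.det • 1 := by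
  rw [adjugate_fin_three, det_fin_three]
  ext i j
  fin_cases i <;> fin_cases j <;>
    simp [mul_apply, Fin.sum_univ_succ, trace_fin_three] <;> ring

lemma transpose_eq_of_mem_specialOrthogonalGroup_fin_three {X : Matrix (Fin 3) (Fin 3) R}
    (hX : X ∈ specialOrthogonalGroup (Fin 3) R) :
    Xᵀ = X * X - X.trace • X + X.trace • 1 := by
  obtain ⟨hO, hdet⟩ := mem_specialOrthogonalGroup_iff.1 hX
  have hXXt := (mem_orthogonalGroup_iff _ _).1 hO
  have hXtX := (mem_orthogonalGroup_iff' _ _).1 hO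
  have hadj : X.adjugate = Xᵀ := by
    rw [← Matrix.mul_one X.adjugate, ← hXXt, ← Matrix.mul_assoc, adjugate_mul, hdet, one_smul,
      Matrix.one_mul]
  have hCH := cayley_hamilton_fin_three X
  rw [hadj, trace_transpose, hdet, one_smul] at hCH
  have := congrArg (Xᵀ * ·) hCH
  simp only [Matrix.mul_add, Matrix.mul_sub, Matrix.mul_smul, ← Matrix.mul_assoc, hXtX,
    Matrix.one_mul, Matrix.mul_one] at this
  linear_combination (norm := abel) -this

/-- Rodrigues' formula `X = 1 + S / 2 + S² / (2 (tr X + 1))` for `S = X - Xᵀ`, multiplied out so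
that it also holds when `tr X = -1`. -/
lemma rodrigues_of_mem_specialOrthogonalGroup_fin_three {X : Matrix (Fin 3) (Fin 3) R}
    (hX : X ∈ specialOrthogonalGroup (Fin 3) R) :
    (2 * (X.trace + 1)) • (X - 1) = (X.trace + 1) • (X - Xᵀ) + (X - Xᵀ) * (X - Xᵀ) := by
  obtain ⟨hO, hdet⟩ := mem_specialOrthogonalGroup_iff.1 hX
  have hXXt := (mem_orthogonalGroup_iff _ _).1 hO
  have hXtX := (mem_orthogonalGroup_iff' _ _).1 hO
  have hXt : Xᵀ ∈ specialOrthogonalGroup (Fin 3) R := mem_specialOrthogonalGroup_iff.2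
    ⟨(mem_orthogonalGroup_iff _ _).2 (by rwa [transpose_transpose]), by rwa [det_transpose]⟩
  have h1 := transpose_eq_of_mem_specialOrthogonalGroup_fin_three hX
  have h2 := transpose_eq_of_mem_specialOrthogonalGroup_fin_three hXt
  rw [transpose_transpose, trace_transpose] at h2
  have e1 : X * X = Xᵀ + X.trace • X - X.trace • 1 := by
    linear_combination (norm := module) -h1
  have e2 : Xᵀ * Xᵀ = X + X.trace • Xᵀ - X.trace • 1 := by
    linear_combination (norm := module) -h2
  rw [sub_mul, mul_sub, mul_sub, e1, e2, hXXt, hXtX]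
  module

lemma mul_self_eq_one_of_trace_eq_neg_one {X : Matrix (Fin 3) (Fin 3) ℝ}
    (hX : X ∈ specialOrthogonalGroup (Fin 3) ℝ) (h : X.trace = -1) : X * X = 1 := by
  have hS : (X - Xᵀ) * (X - Xᵀ) = 0 := by
    simpa [h] using (rodrigues_of_mem_specialOrthogonalGroup_fin_three hX).symm
  have hS0 := eq_zero_of_transpose_eq_neg_of_mul_self_eq_zero (by simp) hS
  exact mul_self_eq_one_of_transpose_eq (mem_specialOrthogonalGroup_iff.1 hX).1
    (sub_eq_zero.1 hS0).symm

variable {K : Type*} [Field K] [NeZero (2 : K)]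

lemma mem_adjoin_sub_transpose_of_trace_ne_neg_one {X : Matrix (Fin 3) (Fin 3) K}
    (hX : X ∈ specialOrthogonalGroup (Fin 3) K) (h : X.trace ≠ -1) :
    X ∈ Algebra.adjoin K {X - Xᵀ} := by
  have hS := Algebra.self_mem_adjoin_singleton K (X - Xᵀ)
  have hc : 2 * (X.trace + 1) ≠ 0 :=
    mul_ne_zero two_ne_zero fun h' => h (eq_neg_of_add_eq_zero_left h')
  have hX1 : X - 1 ∈ Algebra.adjoin K {X - Xᵀ} := by
    rw [← inv_smul_smul₀ hc (X - 1), rodrigues_of_mem_specialOrthogonalGroup_fin_three hX]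
    exact Subalgebra.smul_mem _ (add_mem (Subalgebra.smul_mem _ hS _) (mul_mem hS hS)) _
  simpa using add_mem hX1 (one_mem _)

lemma mem_adjoin_sub_transpose_of_commute {X Y : Matrix (Fin 3) (Fin 3) K}
    (hX : X ∈ specialOrthogonalGroup (Fin 3) K) (hY : Y ∈ specialOrthogonalGroup (Fin 3) K)
    (hX0 : X - Xᵀ ≠ 0) (hY1 : Y.trace ≠ -1) (h : Commute X Y) :
    Y ∈ Algebra.adjoin K {X - Xᵀ} := by
  have hS := commute_sub_transpose_of_mem_orthogonalGroup (mem_specialOrthogonalGroup_iff.1 hX).1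
    (mem_specialOrthogonalGroup_iff.1 hY).1 h
  rw [← crossMatrix_axialVector X, ← crossMatrix_axialVector Y, commute_crossMatrix_iff] at hS
  rw [← crossMatrix_axialVector, Ne, crossMatrix_eq_zero_iff] at hX0
  obtain ⟨c, hc⟩ := exists_smul_eq_of_cross_eq_zero hX0 hS
  have hSY : Y - Yᵀ ∈ Algebra.adjoin K {X - Xᵀ} := by
    rw [← crossMatrix_axialVector Y, ← hc, crossMatrix_smul, crossMatrix_axialVector]
    exact Subalgebra.smul_mem _ (Algebra.self_mem_adjoin_singleton K _) c
  exact Algebra.adjoin_le (Set.singleton_subset_iff.2 hSY)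
    (mem_adjoin_sub_transpose_of_trace_ne_neg_one hY hY1)

end SpecialOrthogonalFinThree

end Matrix

theorem so3_subgroup_no_involution_commutative_transitive_general
    (H : Set (Matrix (Fin 3) (Fin 3) ℝ))
    (hsub : H ⊆ Matrix.specialOrthogonalGroup (Fin 3) ℝ)
    (hno2 : ∀ A ∈ H, A * A = 1 → A = 1)
    (A B C : Matrix (Fin 3) (Fin 3) ℝ)
    (hA : A ∈ H) (hB : B ∈ H) (hC : C ∈ H)
    (hA1 : A ≠ 1) (hB1 : B ≠ 1) (hC1 : C ≠ 1)
    (hAB : A * B = B * A) (hAC : A * C = C * A) :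
    B * C = C * B := by
  have hSA : A - Aᵀ ≠ 0 := fun h => hA1 <| hno2 A hA <| mul_self_eq_one_of_transpose_eq
    (mem_specialOrthogonalGroup_iff.1 (hsub hA)).1 (sub_eq_zero.1 h).symm
  have htrace : ∀ X ∈ H, X ≠ 1 → X.trace ≠ -1 := fun X hX hX1 h =>
    hX1 <| hno2 X hX <| mul_self_eq_one_of_trace_eq_neg_one (hsub hX) h
  have hB' := mem_adjoin_sub_transpose_of_commute (hsub hA) (hsub hB) hSA (htrace B hB hB1) hAB
  have hC' := mem_adjoin_sub_transpose_of_commute (hsub hA) (hsub hC) hSA (htrace C hC hC1) hAC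
  exact Algebra.commute_of_mem_adjoin_singleton_of_commute hC'
    (Algebra.commute_of_mem_adjoin_self hB').symm

theorem so3_subgroup_no_involution_commutative_transitive
    (H : Set (Matrix (Fin 3) (Fin 3) ℝ))
    (hsub : H ⊆ Matrix.specialOrthogonalGroup (Fin 3) ℝ)
    (hone : (1 : Matrix (Fin 3) (Fin 3) ℝ) ∈ H)
    (hmul : ∀ A ∈ H, ∀ B ∈ H, A * B ∈ H)
    (hinv : ∀ A ∈ H, A.transpose ∈ H)
    (hno2 : ∀ A ∈ H, A * A = 1 → A = 1)
    (A B C : Matrix (Fin 3) (Fin 3) ℝ)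
    (hA : A ∈ H) (hB : B ∈ H) (hC : C ∈ H)
    (hA1 : A ≠ 1) (hB1 : B ≠ 1) (hC1 : C ≠ 1)
    (hAB : A * B = B * A) (hAC : A * C = C * A) :
    B * C = C * B :=
  so3_subgroup_no_involution_commutative_transitive_general H hsub hno2 A B C hA hB hC hA1 hB1 hC1
    hAB hAC
end

section
/- Let G1 × G2 be a subgroup of SO_3(R) with G1 and G2 nontrivial. Then at least one of G1 and G2 is abelian. -/
/-!
If every element of `G₂` squares to `1`, then `G₂` is abelian. Otherwise some `A = f (1, g)`
satisfies `A * A ≠ 1`, so the rotation `A` is not symmetric and its skew part `A - Aᵀ` is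
`x ↦ v ⨯₃ x` for a nonzero axis `v`. The image of `G₁` commutes with `A`, hence with `A - Aᵀ`,
and since rotations preserve cross products it fixes `v`. Rotations fixing a common nonzero
vector `v` commute: on `v`'s orthogonal complement each acts as `a • x + b • v ⨯₃ x`.
-/

namespace Matrix

variable {R : Type*} [CommRing R]

theorem ext_of_mulVec_rows {n : Type*} [Fintype n] [DecidableEq n] {M N P : Matrix n n R}
    (hP : IsUnit P.det) (h : ∀ i, M *ᵥ P i = N *ᵥ P i) : M = N := by
  have hPT : IsUnit Pᵀ := by rwa [isUnit_iff_isUnit_det, det_transpose]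
  refine hPT.mul_right_cancel (ext fun i j => ?_)
  simpa [mul_apply, mulVec, dotProduct] using congrFun (h j) i

theorem cross_mulVec_mulVec (M : Matrix (Fin 3) (Fin 3) R) (x y : Fin 3 → R) :
    (M *ᵥ x) ⨯₃ (M *ᵥ y) = (adjugate M)ᵀ *ᵥ (x ⨯₃ y) := by
  ext i
  fin_cases i <;>
    simp [cross_apply, adjugate_fin_three, mulVec, dotProduct, Fin.sum_univ_three] <;> ring

theorem mulVec_cross_of_mem_specialOrthogonalGroup {A : Matrix (Fin 3) (Fin 3) R}
    (hA : A ∈ specialOrthogonalGroup (Fin 3) R) (x y : Fin 3 → R) :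
    A *ᵥ (x ⨯₃ y) = (A *ᵥ x) ⨯₃ (A *ᵥ y) := by
  obtain ⟨hAo, hAdet⟩ := mem_specialOrthogonalGroup_iff.mp hA
  have hadj : adjugate A = Aᵀ := by
    rw [← inv_eq_right_inv ((mem_orthogonalGroup_iff _ _).mp hAo), inv_def, hAdet,
      Ring.inverse_one, one_smul]
  rw [cross_mulVec_mulVec, hadj, transpose_transpose]

theorem dotProduct_mulVec_mulVec_of_mem_orthogonalGroup {n : Type*} [Fintype n] [DecidableEq n]
    {A : Matrix n n R} (hA : A ∈ orthogonalGroup n R) (x y : n → R) :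
    A *ᵥ x ⬝ᵥ A *ᵥ y = x ⬝ᵥ y := by
  rw [dotProduct_mulVec, ← vecMul_transpose, vecMul_vecMul, (mem_orthogonalGroup_iff' _ _).mp hA,
    vecMul_one]

theorem eq_zero_of_forall_cross_eq_zero {u : Fin 3 → R} (h : ∀ y, u ⨯₃ y = 0) : u = 0 := by
  have h₀ := h ![1, 0, 0]
  have h₁ := h ![0, 1, 0]
  simp only [cross_apply] at h₀ h₁
  ext i
  fin_cases i
  · simpa using congrFun h₁ 2
  · simpa using congrFun h₀ 2
  · simpa using congrFun h₀ 1

/-- For a rotation by the angle `θ` about the unit vector `n`, this is `(2 * sin θ) • n`. -/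
def skewAxis (A : Matrix (Fin 3) (Fin 3) R) : Fin 3 → R :=
  ![A 2 1 - A 1 2, A 0 2 - A 2 0, A 1 0 - A 0 1]

theorem sub_transpose_mulVec (A : Matrix (Fin 3) (Fin 3) R) (x : Fin 3 → R) :
    (A - Aᵀ) *ᵥ x = skewAxis A ⨯₃ x := by
  ext i
  fin_cases i <;>
    simp [skewAxis, cross_apply, mulVec, dotProduct, Fin.sum_univ_three] <;> ring

theorem skewAxis_eq_zero_iff {A : Matrix (Fin 3) (Fin 3) R} : skewAxis A = 0 ↔ Aᵀ = A := by
  constructor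
  · intro h
    refine (sub_eq_zero.mp (ext_iff_mulVec.mpr fun x => ?_)).symm
    rw [sub_transpose_mulVec, h, map_zero, LinearMap.zero_apply, zero_mulVec]
  · intro h
    refine eq_zero_of_forall_cross_eq_zero fun x => ?_
    rw [← sub_transpose_mulVec, h, sub_self, zero_mulVec]

theorem mulVec_skewAxis_of_commute {A B : Matrix (Fin 3) (Fin 3) R}
    (hA : A ∈ orthogonalGroup (Fin 3) R) (hB : B ∈ specialOrthogonalGroup (Fin 3) R)
    (hAB : Commute A B) : B *ᵥ skewAxis A = skewAxis A := by
  let uA : (Matrix (Fin 3) (Fin 3) R)ˣ :=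
    ⟨A, Aᵀ, (mem_orthogonalGroup_iff _ _).mp hA, (mem_orthogonalGroup_iff' _ _).mp hA⟩
  have hskew : Commute (A - Aᵀ) B := hAB.sub_left (Commute.units_inv_left (u := uA) hAB)
  refine sub_eq_zero.mp (eq_zero_of_forall_cross_eq_zero fun y => ?_)
  obtain ⟨x, rfl⟩ : ∃ x, B *ᵥ x = y :=
    ⟨Bᵀ *ᵥ y, by rw [mulVec_mulVec, (mem_orthogonalGroup_iff _ _).mp hB.1, one_mulVec]⟩
  rw [map_sub, LinearMap.sub_apply, ← mulVec_cross_of_mem_specialOrthogonalGroup hB,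
    ← sub_transpose_mulVec, ← sub_transpose_mulVec, mulVec_mulVec, mulVec_mulVec, hskew.eq,
    sub_self]

/-- `w` and `v ⨯₃ w` form an orthogonal basis of the orthogonal complement of `v`, and
`(v ⨯₃ w) ⬝ᵥ (v ⨯₃ w) = (v ⬝ᵥ v) * (w ⬝ᵥ w)`; this is the expansion of `u` in it, without
denominators. -/
theorem smul_eq_add_smul_cross_of_dotProduct_eq_zero {u v w : Fin 3 → R} (hu : v ⬝ᵥ u = 0)
    (hw : v ⬝ᵥ w = 0) :
    ((v ⬝ᵥ v) * (w ⬝ᵥ w)) • u = ((v ⬝ᵥ v) * (u ⬝ᵥ w)) • w + (u ⬝ᵥ v ⨯₃ w) • v ⨯₃ w := by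
  ext i
  linear_combination (norm := skip)
    (v ⬝ᵥ w * u i - u ⬝ᵥ w * v i) * hw + (w ⬝ᵥ w * v i - v ⬝ᵥ w * w i) * hu
  fin_cases i <;> simp [cross_apply, dotProduct, Fin.sum_univ_three] <;> ring

section OrderedField

variable {K : Type*} [Field K] [LinearOrder K] [IsStrictOrderedRing K]

theorem exists_mulVec_eq_smul_add_smul_cross {B : Matrix (Fin 3) (Fin 3) K}
    (hB : B ∈ orthogonalGroup (Fin 3) K) {v w : Fin 3 → K} (hv : v ≠ 0) (hw : w ≠ 0)
    (hvw : v ⬝ᵥ w = 0) (hBv : B *ᵥ v = v) :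
    ∃ a b : K, B *ᵥ w = a • w + b • v ⨯₃ w := by
  have hvBw : v ⬝ᵥ B *ᵥ w = 0 := by
    rw [← hBv, dotProduct_mulVec_mulVec_of_mem_orthogonalGroup hB, hvw]
  have hc : (v ⬝ᵥ v) * (w ⬝ᵥ w) ≠ 0 :=
    mul_ne_zero (dotProduct_self_eq_zero.not.mpr hv) (dotProduct_self_eq_zero.not.mpr hw)
  refine ⟨((v ⬝ᵥ v) * (B *ᵥ w ⬝ᵥ w)) / ((v ⬝ᵥ v) * (w ⬝ᵥ w)),
    (B *ᵥ w ⬝ᵥ v ⨯₃ w) / ((v ⬝ᵥ v) * (w ⬝ᵥ w)), ?_⟩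
  rw [← smul_right_inj hc, smul_eq_add_smul_cross_of_dotProduct_eq_zero hvBw hvw, smul_add,
    smul_smul, smul_smul, mul_div_cancel₀ _ hc, mul_div_cancel₀ _ hc]

theorem commute_of_mulVec_eq_self {B C : Matrix (Fin 3) (Fin 3) K}
    (hB : B ∈ specialOrthogonalGroup (Fin 3) K) (hC : C ∈ specialOrthogonalGroup (Fin 3) K)
    {v : Fin 3 → K} (hv : v ≠ 0) (hBv : B *ᵥ v = v) (hCv : C *ᵥ v = v) : Commute B C := by
  have hcross {M : Matrix (Fin 3) (Fin 3) K} (hM : M ∈ specialOrthogonalGroup (Fin 3) K)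
      (hMv : M *ᵥ v = v) (x : Fin 3 → K) : M *ᵥ (v ⨯₃ x) = v ⨯₃ (M *ᵥ x) := by
    rw [mulVec_cross_of_mem_specialOrthogonalGroup hM, hMv]
  obtain ⟨x, hx⟩ : ∃ x, v ⨯₃ x ≠ 0 := by
    by_contra! h
    exact hv (eq_zero_of_forall_cross_eq_zero h)
  set w := v ⨯₃ x
  have hvw : v ⬝ᵥ w = 0 := dot_self_cross v x
  have hn : v ⨯₃ w ⬝ᵥ v ⨯₃ w ≠ 0 := by
    rw [cross_dot_cross, hvw, zero_mul, sub_zero]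
    exact mul_ne_zero (dotProduct_self_eq_zero.not.mpr hv) (dotProduct_self_eq_zero.not.mpr hx)
  obtain ⟨a₁, b₁, hBw⟩ := exists_mulVec_eq_smul_add_smul_cross hB.1 hv hx hvw hBv
  obtain ⟨a₂, b₂, hCw⟩ := exists_mulVec_eq_smul_add_smul_cross hC.1 hv hx hvw hCv
  have hw : (B * C) *ᵥ w = (C * B) *ᵥ w := by
    simp only [← mulVec_mulVec, hBw, hCw, mulVec_add, mulVec_smul, hcross hB hBv,
      hcross hC hCv, map_add, map_smul]
    module
  have hBCv : (B * C) *ᵥ v = v := by rw [← mulVec_mulVec, hCv, hBv]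
  have hCBv : (C * B) *ᵥ v = v := by rw [← mulVec_mulVec, hBv, hCv]
  refine ext_of_mulVec_rows (P := ![v ⨯₃ w, v, w]) ?_ fun i => ?_
  · rw [← triple_product_eq_det]
    exact hn.isUnit
  fin_cases i
  · show (B * C) *ᵥ (v ⨯₃ w) = (C * B) *ᵥ (v ⨯₃ w)
    rw [hcross (mul_mem hB hC) hBCv, hcross (mul_mem hC hB) hCBv, hw]
  · exact hBCv.trans hCBv.symm
  · exact hw

theorem commute_of_commute_of_mul_self_ne_one {A B C : Matrix (Fin 3) (Fin 3) K}
    (hA : A ∈ orthogonalGroup (Fin 3) K) (hAA : A * A ≠ 1)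
    (hB : B ∈ specialOrthogonalGroup (Fin 3) K) (hC : C ∈ specialOrthogonalGroup (Fin 3) K)
    (hAB : Commute A B) (hAC : Commute A C) : Commute B C := by
  have hv : skewAxis A ≠ 0 := fun h => hAA <| by
    rw [← (mem_orthogonalGroup_iff _ _).mp hA, skewAxis_eq_zero_iff.mp h]
  exact commute_of_mulVec_eq_self hB hC hv (mulVec_skewAxis_of_commute hA hB hAB)
    (mulVec_skewAxis_of_commute hA hC hAC)

end OrderedField

end Matrix

open Matrix

theorem so3_direct_product_one_factor_abelian_general (G₁ G₂ : Type*) [Group G₁] [Group G₂]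
    (f : G₁ × G₂ →* Matrix (Fin 3) (Fin 3) ℝ)
    (hrange : ∀ g, f g ∈ Matrix.specialOrthogonalGroup (Fin 3) ℝ)
    (hinj : Function.Injective f) :
    (∀ a b : G₁, a * b = b * a) ∨ (∀ a b : G₂, a * b = b * a) := by
  by_cases hG₂ : ∀ g : G₂, orderOf g ∣ 2
  · exact Or.inr (Commute.of_orderOf_dvd_two hG₂)
  push Not at hG₂
  obtain ⟨g, hg⟩ := hG₂
  have hgg : f (1, g) * f (1, g) ≠ 1 := by
    rw [← map_mul, ← map_one f, hinj.ne_iff, Ne, Prod.ext_iff]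
    simpa [← sq, orderOf_dvd_iff_pow_eq_one] using hg
  have hcomm (a : G₁) : Commute (f (1, g)) (f (a, 1)) :=
    (Commute.prod (Commute.one_left a) (Commute.one_right g)).map f
  refine Or.inl fun a b => ?_
  have hab := Commute.of_map hinj <| commute_of_commute_of_mul_self_ne_one (hrange _).1 hgg
    (hrange _) (hrange _) (hcomm a) (hcomm b)
  simpa using congrArg Prod.fst hab.eq

theorem so3_direct_product_one_factor_abelian (G₁ G₂ : Type*) [Group G₁] [Group G₂]
    (h₁ : ∃ g : G₁, g ≠ 1) (h₂ : ∃ g : G₂, g ≠ 1)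
    (f : G₁ × G₂ →* Matrix (Fin 3) (Fin 3) ℝ)
    (hrange : ∀ g, f g ∈ Matrix.specialOrthogonalGroup (Fin 3) ℝ)
    (hinj : Function.Injective f) :
    (∀ a b : G₁, a * b = b * a) ∨ (∀ a b : G₂, a * b = b * a) :=
  so3_direct_product_one_factor_abelian_general G₁ G₂ f hrange hinj
end

section
/- Let G1 × G2 be a subgroup of SO_3(R) with G1 abelian and nontrivial and G2 non-abelian. Then every nontrivial element of G1 has order 2. -/
/-!
For `A ∈ SO(3)` with `t = tr A` we have `adj A = Aᵀ`, so `A` has characteristic polynomial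
`X³ - tX² + tX - 1 = (X - 1)(X² - (t - 1)X + 1)` and `tr (A²) = t² - 2t`. Since `A² ∈ SO(3)`
is the identity as soon as its trace is `3`, `A² ≠ 1` forces `t ∉ {3, -1}`, and then the three
complex eigenvalues of `A` are distinct. Every matrix commuting with `A` is diagonal in an
eigenbasis of `A`, so the centraliser of `A` is commutative. For `a ∈ G₁` the centraliser of
`f (a, 1)` contains the non-abelian group `f ({1} × G₂)`, hence `f (a, 1)² = 1`.
-/

open Matrix Polynomial Module

theorem Polynomial.exists_card_eq_three_isRoot_cubic {K : Type*} [Field K] [IsAlgClosed K]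
    (t : K) (ht : (t - 3) * (t + 1) ≠ 0) :
    ∃ s : Finset K, s.card = 3 ∧
      ∀ μ ∈ s, (X ^ 3 - C t * X ^ 2 + C t * X - 1 : K[X]).IsRoot μ := by
  classical
  -- the roots are `1` and the roots `ω`, `t - 1 - ω` of `X² - (t - 1)X + 1`
  obtain ⟨ω, hω⟩ := IsAlgClosed.exists_root (X ^ 2 - C (t - 1) * X + 1 : K[X])
    (ne_of_eq_of_ne (by compute_degree!) two_ne_zero)
  have hq : ω ^ 2 - (t - 1) * ω + 1 = 0 := by simpa using hω
  have hq' : (t - 1 - ω) ^ 2 - (t - 1) * (t - 1 - ω) + 1 = 0 := by linear_combination hq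
  have hne_one : ∀ x : K, x ^ 2 - (t - 1) * x + 1 = 0 → 1 ≠ x := by
    rintro x hx rfl
    exact ht (by linear_combination -(t + 1) * hx)
  have hne : ω ≠ t - 1 - ω := fun h => ht (by linear_combination (2 * ω - t + 1) * h - 4 * hq)
  refine ⟨{1, ω, t - 1 - ω}, Finset.card_eq_three.mpr
    ⟨1, ω, t - 1 - ω, hne_one ω hq, hne_one _ hq', hne, rfl⟩, ?_⟩
  simp only [Finset.mem_insert, Finset.mem_singleton, IsRoot, eval_sub, eval_add, eval_mul,
    eval_pow, eval_C, eval_X, eval_one]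
  rintro μ (rfl | rfl | rfl)
  · ring
  · linear_combination (μ - 1) * hq
  · linear_combination (t - 1 - ω - 1) * hq'

namespace Module.Basis

variable {K V ι : Type*} [Field K] [AddCommGroup V] [Module K V] (b : Basis ι K V) {μ : ι → K}
  {f : End K V}

theorem repr_apply_of_apply_eq_smul (hf : ∀ i, f (b i) = μ i • b i) (x : V) (j : ι) :
    b.repr (f x) j = μ j * b.repr x j := by
  have : (Finsupp.lapply j ∘ₗ b.repr.toLinearMap) ∘ₗ f =
      μ j • (Finsupp.lapply j ∘ₗ b.repr.toLinearMap) := by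
    refine b.ext fun i => ?_
    by_cases hij : i = j
    · subst hij
      simp [hf]
    · simp [hf, hij]
  exact LinearMap.congr_fun this x

theorem exists_apply_eq_smul_of_commute (hμ : Function.Injective μ)
    (hf : ∀ i, f (b i) = μ i • b i) {g : End K V} (hg : Commute f g) (i : ι) :
    ∃ c : K, g (b i) = c • b i := by
  refine ⟨b.repr (g (b i)) i, b.repr.injective (Finsupp.ext fun j => ?_)⟩
  by_cases hij : j = i
  · subst hij
    simp
  · have hfg : μ j * b.repr (g (b i)) j = μ i * b.repr (g (b i)) j := by
      rw [← b.repr_apply_of_apply_eq_smul hf, ← End.mul_apply, hg.eq, End.mul_apply, hf,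
        map_smul]
      simp
    simp [(mul_eq_mul_right_iff.mp hfg).resolve_left (hμ.ne hij), Ne.symm hij]

theorem commute_of_commute_of_apply_eq_smul (hμ : Function.Injective μ)
    (hf : ∀ i, f (b i) = μ i • b i) {g h : End K V} (hg : Commute f g) (hh : Commute f h) :
    Commute g h := by
  refine b.ext fun i => ?_
  obtain ⟨c, hc⟩ := b.exists_apply_eq_smul_of_commute hμ hf hg i
  obtain ⟨d, hd⟩ := b.exists_apply_eq_smul_of_commute hμ hf hh i
  rw [End.mul_apply, End.mul_apply, hd, map_smul, hc, map_smul, hd, smul_smul,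
    smul_smul, mul_comm]

end Module.Basis

namespace Module.End

variable {K V : Type*} [Field K] [AddCommGroup V] [Module K V] [FiniteDimensional K V]

theorem commute_of_commute_of_card_eigenvalues {f g h : End K V} (s : Finset K)
    (hs : s.card = finrank K V) (hf : ∀ μ ∈ s, f.HasEigenvalue μ) (hg : Commute f g)
    (hh : Commute f h) : Commute g h := by
  choose v hv using fun μ : s => (hf μ μ.2).exists_hasEigenvector
  have hli := f.eigenvectors_linearIndependent' _ Subtype.val_injective v hv
  let b := basisOfLinearIndependentOfCardEqFinrank' v hli (by simpa using hs)
  refine b.commute_of_commute_of_apply_eq_smul Subtype.val_injective (fun μ => ?_) hg hh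
  simpa [b] using (hv μ).apply_eq_smul

end Module.End

namespace Matrix

theorem charpoly_fin_three {R : Type*} [CommRing R] (A : Matrix (Fin 3) (Fin 3) R) :
    A.charpoly = X ^ 3 - C A.trace * X ^ 2 + C A.adjugate.trace * X - C A.det := by
  simp only [charpoly, charmatrix_apply, det_fin_three, trace_fin_three, adjugate_fin_three,
    of_apply, cons_val', cons_val_zero, cons_val_one, cons_val_fin_one, cons_val, diagonal_apply,
    Fin.reduceEq, if_true, if_false, map_add, map_sub, map_mul]
  ring

theorem trace_mul_self_fin_three {R : Type*} [CommRing R] (A : Matrix (Fin 3) (Fin 3) R) :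
    (A * A).trace = A.trace ^ 2 - 2 * A.adjugate.trace := by
  simp only [trace_fin_three, mul_apply, Fin.sum_univ_three, adjugate_fin_three, of_apply,
    cons_val', cons_val_zero, cons_val_fin_one, cons_val_one, cons_val]
  ring

theorem adjugate_eq_transpose_of_mem_specialOrthogonalGroup {n R : Type*} [Fintype n]
    [DecidableEq n] [CommRing R] {A : Matrix n n R} (hA : A ∈ specialOrthogonalGroup n R) :
    A.adjugate = Aᵀ := by
  obtain ⟨hO, hdet⟩ := mem_specialOrthogonalGroup_iff.mp hA
  calc A.adjugate = (Aᵀ * A) * A.adjugate := by rw [(mem_orthogonalGroup_iff' n R).mp hO, one_mul]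
    _ = Aᵀ := by rw [Matrix.mul_assoc, mul_adjugate, hdet, one_smul, Matrix.mul_one]

theorem eq_one_of_mem_orthogonalGroup_of_trace_eq_card {n : Type*} [Fintype n]
    [DecidableEq n] {A : Matrix n n ℝ} (hA : A ∈ orthogonalGroup n ℝ)
    (htr : A.trace = Fintype.card n) : A = 1 := by
  have hO : Aᵀ * A = 1 := (mem_orthogonalGroup_iff' n ℝ).mp hA
  have hexpand : (A - 1)ᵀ * (A - 1) = Aᵀ * A - Aᵀ - A + 1 := by
    rw [transpose_sub, transpose_one]
    noncomm_ring
  rw [← sub_eq_zero, ← trace_conjTranspose_mul_self_eq_zero_iff,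
    conjTranspose_eq_transpose_of_trivial, hexpand, hO]
  simp [trace_transpose, htr]

section SpecialOrthogonalFinThree

variable {R : Type*} [CommRing R] {A : Matrix (Fin 3) (Fin 3) R}

theorem charpoly_of_mem_specialOrthogonalGroup_fin_three
    (hA : A ∈ specialOrthogonalGroup (Fin 3) R) :
    A.charpoly = X ^ 3 - C A.trace * X ^ 2 + C A.trace * X - 1 := by
  rw [charpoly_fin_three, adjugate_eq_transpose_of_mem_specialOrthogonalGroup hA, trace_transpose,
    (mem_specialOrthogonalGroup_iff.mp hA).2, C_1]

theorem trace_mul_self_of_mem_specialOrthogonalGroup_fin_three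
    (hA : A ∈ specialOrthogonalGroup (Fin 3) R) :
    (A * A).trace = A.trace ^ 2 - 2 * A.trace := by
  rw [trace_mul_self_fin_three, adjugate_eq_transpose_of_mem_specialOrthogonalGroup hA,
    trace_transpose]

end SpecialOrthogonalFinThree

theorem commute_of_commute_of_mem_specialOrthogonalGroup_fin_three
    {A B C : Matrix (Fin 3) (Fin 3) ℝ} (hA : A ∈ specialOrthogonalGroup (Fin 3) ℝ)
    (hA2 : A * A ≠ 1) (hB : Commute A B) (hC : Commute A C) : Commute B C := by
  have ht : (A.trace - 3) * (A.trace + 1) ≠ 0 := fun h => hA2 <|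
    eq_one_of_mem_orthogonalGroup_of_trace_eq_card (mul_mem hA hA).1 <| by
      rw [trace_mul_self_of_mem_specialOrthogonalGroup_fin_three hA, Fintype.card_fin,
        Nat.cast_ofNat]
      linear_combination h
  obtain ⟨s, hs, hroots⟩ := exists_card_eq_three_isRoot_cubic (A.trace : ℂ) (mod_cast ht)
  let Φ : Matrix (Fin 3) (Fin 3) ℝ →+* Module.End ℂ (Fin 3 → ℂ) :=
    toLinAlgEquiv'.toRingHom.comp Complex.ofRealHom.mapMatrix
  have hΦ : Function.Injective Φ :=
    toLinAlgEquiv'.injective.comp (map_injective Complex.ofReal_injective)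
  refine .of_map hΦ <| Module.End.commute_of_commute_of_card_eigenvalues s (by simpa using hs)
    (fun μ hμ => ?_) (hB.map Φ) (hC.map Φ)
  rw [Module.End.hasEigenvalue_iff_isRoot_charpoly]
  change (toLin' (A.map Complex.ofRealHom)).charpoly.IsRoot μ
  rw [charpoly_toLin', charpoly_map, charpoly_of_mem_specialOrthogonalGroup_fin_three hA]
  simpa using hroots μ hμ

end Matrix

theorem so3_abelian_factor_exponent_two_general (G₁ G₂ : Type*) [Group G₁] [Group G₂]
    (h₂nonab : ¬ ∀ a b : G₂, a * b = b * a)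
    (f : G₁ × G₂ →* Matrix (Fin 3) (Fin 3) ℝ)
    (hrange : ∀ g, f g ∈ Matrix.specialOrthogonalGroup (Fin 3) ℝ)
    (hinj : Function.Injective f) :
    ∀ a : G₁, a ≠ 1 → a ^ 2 = 1 := by
  intro a _
  by_contra ha
  have hA2 : f (a, 1) * f (a, 1) ≠ 1 := fun h => ha <| by
    have hsq : ((a, 1) : G₁ × G₂) ^ 2 = 1 := hinj (by rw [map_pow, pow_two, h, map_one])
    simpa using congrArg Prod.fst hsq
  have hcomm : ∀ g : G₂, Commute (f (a, 1)) (f (1, g)) := fun g =>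
    (show Commute ((a, 1) : G₁ × G₂) (1, g) from Prod.ext (by simp) (by simp)).map f
  refine h₂nonab fun b c => congrArg Prod.snd (?_ : Commute ((1, b) : G₁ × G₂) (1, c)).eq
  exact .of_map hinj <| Matrix.commute_of_commute_of_mem_specialOrthogonalGroup_fin_three
    (hrange _) hA2 (hcomm b) (hcomm c)

theorem so3_abelian_factor_exponent_two (G₁ G₂ : Type*) [Group G₁] [Group G₂]
    (h₁ab : ∀ a b : G₁, a * b = b * a) (h₁ : ∃ g : G₁, g ≠ 1)
    (h₂nonab : ¬ ∀ a b : G₂, a * b = b * a)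
    (f : G₁ × G₂ →* Matrix (Fin 3) (Fin 3) ℝ)
    (hrange : ∀ g, f g ∈ Matrix.specialOrthogonalGroup (Fin 3) ℝ)
    (hinj : Function.Injective f) :
    ∀ a : G₁, a ≠ 1 → a ^ 2 = 1 :=
  so3_abelian_factor_exponent_two_general G₁ G₂ h₂nonab f hrange hinj
end

section
/- Let G1 × G2 be a subgroup of SO_3(R) with G1 and G2 nontrivial and G1 × G2 non-abelian. Then exactly one of the factors is the group of order 2, and the other factor is non-abelian and contains an element of order 2. -/
/-!
A rotation `R ≠ 1` of `ℝ³` fixes exactly one line, its axis, so anything commuting with `R` maps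
the axis to itself, acting on it by `±1`. Rotations with a common axis commute, and a rotation is
determined by its values at two independent vectors.

Write `A = f(G₁)`, `B = f(G₂)` with `B` non-abelian. The centraliser of `B` is abelian: its
elements act diagonally on the (independent) axes of two non-commuting elements of `B`. Take
`c ∈ A`, `c ≠ 1`, with axis `w`. Not every element of `B` fixes `w`, so some `b ∈ B` reverses it,
and then `c` reverses the axis `v` of `b`; hence `b` is a half-turn. Every element of `A` acts by
signs on `v` and `w`, so it is one of `1, c, b, cb`, and since `A ∩ B = 1`, `A = {1, c}`.
-/

open Matrix

namespace SO3

local notation "SO₃" => specialOrthogonalGroup (Fin 3) ℝ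

section General

variable {K : Type*}

lemma dotProduct_mulVec_mulVec [CommRing K] {n : Type*} [Fintype n] [DecidableEq n]
    {R : Matrix n n K} (hR : R ∈ orthogonalGroup n K) (x y : n → K) :
    R *ᵥ x ⬝ᵥ R *ᵥ y = x ⬝ᵥ y := by
  rw [dotProduct_mulVec, ← mulVec_transpose, mulVec_mulVec, (mem_orthogonalGroup_iff' n K).1 hR,
    one_mulVec]

lemma transpose_mulVec_cross_mulVec [CommRing K] (R : Matrix (Fin 3) (Fin 3) K)
    (x y : Fin 3 → K) : Rᵀ *ᵥ ((R *ᵥ x) ⨯₃ (R *ᵥ y)) = R.det • (x ⨯₃ y) := by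
  ext i
  fin_cases i <;>
    simp [mulVec, cross_apply, dotProduct, Fin.sum_univ_three, det_fin_three] <;> ring

variable {u v w x y : Fin 3 → K}

lemma eq_of_dotProduct_eq [CommRing K] [IsDomain K] (h : det ![u, v, w] ≠ 0)
    (hu : u ⬝ᵥ x = u ⬝ᵥ y) (hv : v ⬝ᵥ x = v ⬝ᵥ y) (hw : w ⬝ᵥ x = w ⬝ᵥ y) : x = y := by
  refine sub_eq_zero.1 (eq_zero_of_mulVec_eq_zero h ?_)
  ext i
  fin_cases i <;> simp [mulVec, dotProduct_sub, hu, hv, hw]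

lemma ext_of_mulVec_eq [CommRing K] [IsDomain K] {R S : Matrix (Fin 3) (Fin 3) K}
    (h : det ![u, v, w] ≠ 0) (hu : R *ᵥ u = S *ᵥ u) (hv : R *ᵥ v = S *ᵥ v)
    (hw : R *ᵥ w = S *ᵥ w) : R = S := by
  funext i
  refine eq_of_dotProduct_eq h ?_ ?_ ?_ <;>
    simp only [dotProduct_comm _ (R i), dotProduct_comm _ (S i)]
  exacts [congrFun hu i, congrFun hv i, congrFun hw i]

lemma exists_smul_eq_of_cross_eq_zero [Field K] (hv : v ≠ 0) (h : v ⨯₃ w = 0) :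
    ∃ t : K, t • v = w := by
  by_contra! ht
  exact crossProduct_ne_zero_iff_linearIndependent.2 ((LinearIndependent.pair_iff' hv).2 ht) h

variable [Field K] [LinearOrder K] [IsStrictOrderedRing K]

lemma det_cross_ne_zero (h : v ⨯₃ w ≠ 0) : det ![v, w, v ⨯₃ w] ≠ 0 := by
  rwa [← triple_product_eq_det, ← triple_product_permutation, Ne, dotProduct_self_eq_zero]

lemma exists_dotProduct_eq_zero_cross_ne_zero (hv : v ≠ 0) :
    ∃ w, v ⬝ᵥ w = 0 ∧ v ⨯₃ w ≠ 0 := by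
  -- a kernel vector of the singular matrix with rows `v, 0, 0`
  obtain ⟨w, hw0, hw⟩ := exists_mulVec_eq_zero_iff.2
    (det_eq_zero_of_row_eq_zero (A := of ![v, 0, 0]) 1 fun _ => rfl)
  have hvw : v ⬝ᵥ w = 0 := congrFun hw 0
  refine ⟨w, hvw, fun h => ?_⟩
  have hlagrange := cross_dot_cross v w v w
  rw [h, zero_dotProduct, hvw, zero_mul, sub_zero, eq_comm, mul_eq_zero,
    dotProduct_self_eq_zero, dotProduct_self_eq_zero] at hlagrange
  exact hlagrange.elim hv hw0

end General

variable {R S T : Matrix (Fin 3) (Fin 3) ℝ} {v w : Fin 3 → ℝ}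

lemma mulVec_cross (hR : R ∈ SO₃) (x y : Fin 3 → ℝ) : R *ᵥ (x ⨯₃ y) = (R *ᵥ x) ⨯₃ (R *ᵥ y) := by
  have hRT : R * Rᵀ = 1 := (mem_orthogonalGroup_iff _ _).1 hR.1
  have hdet : R.det = 1 := hR.2
  rw [← one_mulVec ((R *ᵥ x) ⨯₃ (R *ᵥ y)), ← hRT, ← mulVec_mulVec, transpose_mulVec_cross_mulVec,
    hdet, one_smul]

lemma eq_of_mulVec_eq (hR : R ∈ SO₃) (hS : S ∈ SO₃) (hvw : v ⨯₃ w ≠ 0)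
    (hv : R *ᵥ v = S *ᵥ v) (hw : R *ᵥ w = S *ᵥ w) : R = S :=
  ext_of_mulVec_eq (det_cross_ne_zero hvw) hv hw
    (by rw [mulVec_cross hR, mulVec_cross hS, hv, hw])

lemma exists_mulVec_eq_self (hR : R ∈ SO₃) : ∃ v ≠ 0, R *ᵥ v = v := by
  have hRT : Rᵀ * R = 1 := (mem_orthogonalGroup_iff' _ _).1 hR.1
  have hdet : R.det = 1 := hR.2
  -- in odd dimension, `Rᵀ * (R - 1) = -(R - 1)ᵀ` forces `det (R - 1) = -det (R - 1)`
  have h : (R - 1).det = 0 := by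
    have h' := congrArg det (show Rᵀ * (R - 1) = -(R - 1)ᵀ by
      rw [mul_sub, hRT, mul_one, transpose_sub, transpose_one, neg_sub])
    rw [det_mul, det_transpose, hdet, one_mul, det_neg, det_transpose] at h'
    norm_num at h'
    linarith
  obtain ⟨v, hv0, hv⟩ := exists_mulVec_eq_zero_iff.2 h
  exact ⟨v, hv0, by rwa [sub_mulVec, one_mulVec, sub_eq_zero] at hv⟩

lemma cross_eq_zero_of_mulVec_eq_self (hR : R ∈ SO₃) (hR1 : R ≠ 1) (hv : R *ᵥ v = v)
    (hw : R *ᵥ w = w) : v ⨯₃ w = 0 := by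
  by_contra h
  exact hR1 (eq_of_mulVec_eq hR (one_mem _) h (by rw [hv, one_mulVec]) (by rw [hw, one_mulVec]))

lemma exists_mulVec_eq_smul_of_commute (hR : R ∈ SO₃) (hR1 : R ≠ 1) (hv0 : v ≠ 0)
    (hv : R *ᵥ v = v) (hRS : Commute R S) : ∃ t : ℝ, S *ᵥ v = t • v := by
  have hSv : R *ᵥ (S *ᵥ v) = S *ᵥ v := by rw [mulVec_mulVec, hRS.eq, ← mulVec_mulVec, hv]
  obtain ⟨t, ht⟩ :=
    exists_smul_eq_of_cross_eq_zero hv0 (cross_eq_zero_of_mulVec_eq_self hR hR1 hv hSv)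
  exact ⟨t, ht.symm⟩

lemma mulVec_eq_or_eq_neg_of_commute (hR : R ∈ SO₃) (hR1 : R ≠ 1)
    (hS : S ∈ orthogonalGroup (Fin 3) ℝ) (hv0 : v ≠ 0) (hv : R *ᵥ v = v) (hRS : Commute R S) :
    S *ᵥ v = v ∨ S *ᵥ v = -v := by
  obtain ⟨t, ht⟩ := exists_mulVec_eq_smul_of_commute hR hR1 hv0 hv hRS
  have hnorm := dotProduct_mulVec_mulVec hS v v
  rw [ht, smul_dotProduct, dotProduct_smul, smul_eq_mul, smul_eq_mul, ← mul_assoc] at hnorm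
  have ht2 : t * t = 1 :=
    mul_right_cancel₀ (dotProduct_self_eq_zero.not.2 hv0) (by rw [hnorm, one_mul])
  rcases mul_self_eq_one_iff.1 ht2 with rfl | rfl
  · exact .inl (by rw [ht, one_smul])
  · exact .inr (by rw [ht, neg_one_smul])

lemma exists_mulVec_eq_of_mulVec_eq_self (hR : R ∈ SO₃) (hv : R *ᵥ v = v) (hvw : v ⬝ᵥ w = 0)
    (hu : v ⨯₃ w ≠ 0) : ∃ a b : ℝ, R *ᵥ w = a • w + b • (v ⨯₃ w) ∧
      R *ᵥ (v ⨯₃ w) = a • (v ⨯₃ w) - (b * (v ⬝ᵥ v)) • w := by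
  -- on the plane `v⊥`, with orthogonal basis `w, v ⨯₃ w`, `R` acts as `a + b (v ⨯₃ ·)`
  have hw0 : w ⬝ᵥ w ≠ 0 := by
    rw [Ne, dotProduct_self_eq_zero]; rintro rfl; exact hu (by simp)
  have hu0 : v ⨯₃ w ⬝ᵥ v ⨯₃ w ≠ 0 := dotProduct_self_eq_zero.not.2 hu
  have hwu : v ⨯₃ w ⬝ᵥ w = 0 := by rw [dotProduct_comm, dot_cross_self]
  set a := R *ᵥ w ⬝ᵥ w / (w ⬝ᵥ w)
  set b := R *ᵥ w ⬝ᵥ v ⨯₃ w / (v ⨯₃ w ⬝ᵥ v ⨯₃ w)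
  have hRw : R *ᵥ w = a • w + b • (v ⨯₃ w) := by
    refine eq_of_dotProduct_eq (det_cross_ne_zero hu) ?_ ?_ ?_ <;>
      simp only [dotProduct_add, dotProduct_smul, smul_eq_mul, hvw, dot_self_cross,
        dot_cross_self, hwu, mul_zero, add_zero, zero_add]
    · rw [← hv, dotProduct_mulVec_mulVec hR.1, hvw]
    · rw [dotProduct_comm, div_mul_cancel₀ _ hw0]
    · rw [dotProduct_comm, div_mul_cancel₀ _ hu0]
  refine ⟨a, b, hRw, ?_⟩
  rw [mulVec_cross hR, hv, hRw, map_add, map_smul, map_smul,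
    cross_cross_eq_smul_sub_smul', hvw]
  module

lemma commute_of_mulVec_eq_self (hR : R ∈ SO₃) (hS : S ∈ SO₃) (hv0 : v ≠ 0)
    (hRv : R *ᵥ v = v) (hSv : S *ᵥ v = v) : Commute R S := by
  obtain ⟨w, hvw, hu⟩ := exists_dotProduct_eq_zero_cross_ne_zero hv0
  obtain ⟨a, b, hRw, hRu⟩ := exists_mulVec_eq_of_mulVec_eq_self hR hRv hvw hu
  obtain ⟨c, d, hSw, hSu⟩ := exists_mulVec_eq_of_mulVec_eq_self hS hSv hvw hu
  refine eq_of_mulVec_eq (mul_mem hR hS) (mul_mem hS hR) hu ?_ ?_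
  · simp only [← mulVec_mulVec, hRv, hSv]
  · simp only [← mulVec_mulVec, hRw, hSw, mulVec_add, mulVec_smul, hRu, hSu]
    module

lemma commute_of_mulVec_eq_smul (hR : R ∈ SO₃) (hS : S ∈ SO₃) (hvw : v ⨯₃ w ≠ 0) {a b c d : ℝ}
    (hRv : R *ᵥ v = a • v) (hRw : R *ᵥ w = b • w) (hSv : S *ᵥ v = c • v)
    (hSw : S *ᵥ w = d • w) : Commute R S :=
  eq_of_mulVec_eq (mul_mem hR hS) (mul_mem hS hR) hvw
    (by simp only [← mulVec_mulVec, mulVec_smul, hRv, hSv, smul_smul, mul_comm])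
    (by simp only [← mulVec_mulVec, mulVec_smul, hRw, hSw, smul_smul, mul_comm])

lemma commute_of_commute_of_not_commute {R₁ R₂ : Matrix (Fin 3) (Fin 3) ℝ} (hR₁ : R₁ ∈ SO₃)
    (hR₂ : R₂ ∈ SO₃) (h : ¬Commute R₁ R₂) (hS : S ∈ SO₃) (hT : T ∈ SO₃)
    (hS₁ : Commute R₁ S) (hS₂ : Commute R₂ S) (hT₁ : Commute R₁ T) (hT₂ : Commute R₂ T) :
    Commute S T := by
  have hR₁1 : R₁ ≠ 1 := by rintro rfl; exact h (Commute.one_left _)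
  have hR₂1 : R₂ ≠ 1 := by rintro rfl; exact h (Commute.one_right _)
  obtain ⟨a₁, ha₁0, ha₁⟩ := exists_mulVec_eq_self hR₁
  obtain ⟨a₂, ha₂0, ha₂⟩ := exists_mulVec_eq_self hR₂
  have ha : a₁ ⨯₃ a₂ ≠ 0 := by
    intro h0
    obtain ⟨t, rfl⟩ := exists_smul_eq_of_cross_eq_zero ha₁0 h0
    exact h (commute_of_mulVec_eq_self hR₁ hR₂ ha₂0 (by rw [mulVec_smul, ha₁]) ha₂)
  obtain ⟨s₁, hs₁⟩ := exists_mulVec_eq_smul_of_commute hR₁ hR₁1 ha₁0 ha₁ hS₁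
  obtain ⟨s₂, hs₂⟩ := exists_mulVec_eq_smul_of_commute hR₂ hR₂1 ha₂0 ha₂ hS₂
  obtain ⟨t₁, ht₁⟩ := exists_mulVec_eq_smul_of_commute hR₁ hR₁1 ha₁0 ha₁ hT₁
  obtain ⟨t₂, ht₂⟩ := exists_mulVec_eq_smul_of_commute hR₂ hR₂1 ha₂0 ha₂ hT₂
  exact commute_of_mulVec_eq_smul hS hT ha hs₁ hs₂ ht₁ ht₂

lemma mulVec_eq_neg_or_mulVec_eq_neg_of_not_commute {R₁ R₂ : Matrix (Fin 3) (Fin 3) ℝ}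
    (hR : R ∈ SO₃) (hR1 : R ≠ 1) (hR₁ : R₁ ∈ SO₃) (hR₂ : R₂ ∈ SO₃) (h : ¬Commute R₁ R₂)
    (h₁ : Commute R R₁) (h₂ : Commute R R₂) (hw0 : w ≠ 0) (hw : R *ᵥ w = w) :
    R₁ *ᵥ w = -w ∨ R₂ *ᵥ w = -w := by
  rcases mulVec_eq_or_eq_neg_of_commute hR hR1 hR₁.1 hw0 hw h₁ with hw₁ | hw₁
  · rcases mulVec_eq_or_eq_neg_of_commute hR hR1 hR₂.1 hw0 hw h₂ with hw₂ | hw₂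
    · exact (h (commute_of_mulVec_eq_self hR₁ hR₂ hw0 hw₁ hw₂)).elim
    · exact .inr hw₂
  · exact .inl hw₁

lemma exists_transverse_axis_of_commute (hR : R ∈ SO₃) (hS : S ∈ SO₃) (hR1 : R ≠ 1)
    (hRS : Commute R S) (hw0 : w ≠ 0) (hRw : R *ᵥ w = w) (hSw : S *ᵥ w = -w) :
    ∃ v, v ⨯₃ w ≠ 0 ∧ R *ᵥ v = -v ∧ S *ᵥ v = v := by
  have hS1 : S ≠ 1 := by
    rintro rfl; rw [one_mulVec] at hSw; exact hw0 (self_eq_neg.1 hSw)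
  obtain ⟨v, hv0, hSv⟩ := exists_mulVec_eq_self hS
  have hvw : v ⨯₃ w ≠ 0 := by
    intro h
    obtain ⟨t, rfl⟩ := exists_smul_eq_of_cross_eq_zero hv0 h
    rw [mulVec_smul, hSv] at hSw
    exact hw0 (self_eq_neg.1 hSw)
  refine ⟨v, hvw, ?_, hSv⟩
  exact (mulVec_eq_or_eq_neg_of_commute hS hS1 hR.1 hv0 hSv hRS.symm).resolve_left
    fun hRv => hvw (cross_eq_zero_of_mulVec_eq_self hR hR1 hRv hRw)

lemma eq_one_or_eq_or_eq_or_eq_mul {C D : Matrix (Fin 3) (Fin 3) ℝ} (hR : R ∈ SO₃)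
    (hC : C ∈ SO₃) (hD : D ∈ SO₃) (hvw : v ⨯₃ w ≠ 0) (hCv : C *ᵥ v = -v) (hCw : C *ᵥ w = w)
    (hDv : D *ᵥ v = v) (hDw : D *ᵥ w = -w) (hRv : R *ᵥ v = v ∨ R *ᵥ v = -v)
    (hRw : R *ᵥ w = w ∨ R *ᵥ w = -w) : R = 1 ∨ R = C ∨ R = D ∨ R = C * D := by
  rcases hRv with hRv | hRv <;> rcases hRw with hRw | hRw
  · exact .inl (eq_of_mulVec_eq hR (one_mem _) hvw (by simp [hRv]) (by simp [hRw]))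
  · exact .inr (.inr (.inl (eq_of_mulVec_eq hR hD hvw (by rw [hRv, hDv]) (by rw [hRw, hDw]))))
  · exact .inr (.inl (eq_of_mulVec_eq hR hC hvw (by rw [hRv, hCv]) (by rw [hRw, hCw])))
  · refine .inr (.inr (.inr (eq_of_mulVec_eq hR (mul_mem hC hD) hvw ?_ ?_))) <;>
      simp [← mulVec_mulVec, mulVec_neg, hRv, hRw, hCv, hCw, hDv, hDw]

lemma mul_self_eq_one_of_mulVec_eq_neg (hR : R ∈ SO₃) (hvw : v ⨯₃ w ≠ 0) (hv : R *ᵥ v = v)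
    (hw : R *ᵥ w = -w) : R * R = 1 :=
  eq_of_mulVec_eq (mul_mem hR hR) (one_mem _) hvw
    (by rw [← mulVec_mulVec, hv, hv, one_mulVec])
    (by rw [← mulVec_mulVec, hw, mulVec_neg, hw, neg_neg, one_mulVec])

section Group

variable {G₁ G₂ : Type*} [Group G₁] [Group G₂] {f : G₁ × G₂ →* Matrix (Fin 3) (Fin 3) ℝ}

lemma commute_map_mk_one_map_one_mk (x : G₁) (y : G₂) : Commute (f (x, 1)) (f (1, y)) :=
  (Commute.prod (Commute.one_right x) (Commute.one_left y)).map f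

lemma eq_one_or_eq_of_mulVec_eq_or_eq_neg (hrange : ∀ g, f g ∈ SO₃)
    (hinj : Function.Injective f) (hvw : v ⨯₃ w ≠ 0) {x₀ x : G₁} {y : G₂} (hy1 : y ≠ 1)
    (hcv : f (x₀, 1) *ᵥ v = -v) (hcw : f (x₀, 1) *ᵥ w = w)
    (hyv : f (1, y) *ᵥ v = v) (hyw : f (1, y) *ᵥ w = -w)
    (hxv : f (x, 1) *ᵥ v = v ∨ f (x, 1) *ᵥ v = -v)
    (hxw : f (x, 1) *ᵥ w = w ∨ f (x, 1) *ᵥ w = -w) : x = 1 ∨ x = x₀ := by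
  rcases eq_one_or_eq_or_eq_or_eq_mul (hrange _) (hrange _) (hrange _) hvw hcv hcw hyv hyw
    hxv hxw with h | h | h | h
  · exact .inl (by simpa using hinj (h.trans (map_one f).symm))
  · exact .inr (by simpa using hinj h)
  · exact (hy1 (congrArg Prod.snd (hinj h)).symm).elim
  · rw [← map_mul, Prod.mk_mul_mk, mul_one, one_mul] at h
    exact (hy1 (congrArg Prod.snd (hinj h)).symm).elim

theorem card_eq_two_and_exists_sq_eq_one (hrange : ∀ g, f g ∈ SO₃)
    (hinj : Function.Injective f) (h₁ : ∃ g : G₁, g ≠ 1) (h₂ : ¬ ∀ a b : G₂, a * b = b * a) :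
    Nat.card G₁ = 2 ∧ ∃ b : G₂, b ≠ 1 ∧ b ^ 2 = 1 := by
  have hcomm := commute_map_mk_one_map_one_mk (f := f)
  simp only [not_forall] at h₂
  obtain ⟨y₁, y₂, hy⟩ := h₂
  have hB : ¬Commute (f (1, y₁)) (f (1, y₂)) := fun h =>
    hy (congrArg Prod.snd (h.of_map hinj).eq)
  obtain ⟨x₀, hx₀⟩ := h₁
  have hc1 : f (x₀, 1) ≠ 1 := (map_ne_one_iff f hinj).2 (by simp [hx₀])
  obtain ⟨w, hw0, hcw⟩ := exists_mulVec_eq_self (hrange (x₀, 1))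
  obtain ⟨y, hyw⟩ : ∃ y, f (1, y) *ᵥ w = -w :=
    (mulVec_eq_neg_or_mulVec_eq_neg_of_not_commute (hrange _) hc1 (hrange _) (hrange _) hB
      (hcomm x₀ y₁) (hcomm x₀ y₂) hw0 hcw).elim (fun h => ⟨y₁, h⟩) fun h => ⟨y₂, h⟩
  obtain ⟨v, hvw, hcv, hyv⟩ :=
    exists_transverse_axis_of_commute (hrange _) (hrange _) hc1 (hcomm x₀ y) hw0 hcw hyw
  have hv0 : v ≠ 0 := by rintro rfl; simp at hvw
  have hy1 : y ≠ 1 := by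
    rintro rfl
    rw [Prod.mk_one_one, map_one, one_mulVec] at hyw
    exact hw0 (self_eq_neg.1 hyw)
  have hG₁ : ∀ x : G₁, x = 1 ∨ x = x₀ := fun x =>
    eq_one_or_eq_of_mulVec_eq_or_eq_neg hrange hinj hvw hy1 hcv hcw hyv hyw
      (mulVec_eq_or_eq_neg_of_commute (hrange _) ((map_ne_one_iff f hinj).2 (by simp [hy1]))
        (hrange (x, 1)).1 hv0 hyv (hcomm x y).symm)
      (mulVec_eq_or_eq_neg_of_commute (hrange _) hc1 (hrange (x, 1)).1 hw0 hcw
        (commute_of_commute_of_not_commute (hrange _) (hrange _) hB (hrange _) (hrange _)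
          (hcomm x₀ y₁).symm (hcomm x₀ y₂).symm (hcomm x y₁).symm (hcomm x y₂).symm))
  have hsq := mul_self_eq_one_of_mulVec_eq_neg (hrange (1, y)) hvw hyv hyw
  rw [← map_mul, Prod.mk_mul_mk, one_mul, ← map_one f, ← Prod.mk_one_one] at hsq
  exact ⟨Nat.card_eq_two_iff.2 ⟨1, x₀, hx₀.symm, Set.eq_univ_of_forall hG₁⟩, y, hy1,
    by rw [sq]; exact congrArg Prod.snd (hinj hsq)⟩

end Group

end SO3

theorem so3_direct_product_structure (G₁ G₂ : Type*) [Group G₁] [Group G₂]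
    (h₁ : ∃ g : G₁, g ≠ 1) (h₂ : ∃ g : G₂, g ≠ 1)
    (f : G₁ × G₂ →* Matrix (Fin 3) (Fin 3) ℝ)
    (hrange : ∀ g, f g ∈ Matrix.specialOrthogonalGroup (Fin 3) ℝ)
    (hinj : Function.Injective f)
    (hnonab : ¬ ∀ a b : G₁ × G₂, a * b = b * a) :
    (Nat.card G₁ = 2 ∧ (¬ ∀ a b : G₂, a * b = b * a) ∧ ∃ b : G₂, b ≠ 1 ∧ b ^ 2 = 1) ∨
    (Nat.card G₂ = 2 ∧ (¬ ∀ a b : G₁, a * b = b * a) ∧ ∃ a : G₁, a ≠ 1 ∧ a ^ 2 = 1) := by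
  by_cases hG₂ : ∀ a b : G₂, a * b = b * a
  · have hG₁ : ¬ ∀ a b : G₁, a * b = b * a := fun hG₁ =>
      hnonab fun a b => Prod.ext (hG₁ _ _) (hG₂ _ _)
    let e : G₂ × G₁ ≃* G₁ × G₂ := MulEquiv.prodComm
    obtain ⟨hcard, hinv⟩ := SO3.card_eq_two_and_exists_sq_eq_one (f := f.comp e.toMonoidHom)
      (fun _ => hrange _) (hinj.comp e.injective) h₂ hG₁
    exact .inr ⟨hcard, hG₁, hinv⟩
  · obtain ⟨hcard, hinv⟩ := SO3.card_eq_two_and_exists_sq_eq_one hrange hinj h₁ hG₂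
    exact .inl ⟨hcard, hG₂, hinv⟩
end

section
/- The subgroup of SO_3(R) generated by A = diag(1,-1,-1), the rotation B̃ about the x-axis with rows (1,0,0),(0,-3/5,-4/5),(0,4/5,-3/5), and C = diag(-1,1,-1) is a non-abelian group isomorphic to the direct product of the group of order 2 generated by A and the infinite non-abelian group generated by B̃ and C; in particular A does not lie in the subgroup generated by B̃ and C. -/
/-!
Since `C B̃ C⁻¹ = B̃⁻¹` and `C² = 1`, every element of `⟨B̃, C⟩` is `B̃ⁿ` or `C B̃ⁿ`.
The matrix `5 B̃` is integral and its reduction mod 5 is minus a nonzero idempotent, so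
`(5 B̃)ᵏ ≢ 0 = 5ᵏ` mod 5 and `B̃` has infinite order. Hence `⟨B̃, C⟩` is infinite dihedral with
trivial centre. `A` is a nontrivial involution commuting with `B̃` and `C`, so it is not in
`⟨B̃, C⟩`, and `(x, y) ↦ x y` is an injective homomorphism from `⟨A⟩ × ⟨B̃, C⟩` onto `⟨A, B̃, C⟩`.
-/

open Subgroup

section InfiniteDihedral

variable {G : Type*} [Group G] {b c : G}

theorem zpow_mul_eq_mul_zpow_neg_of_conj_eq_inv (hcb : c * b * c⁻¹ = b⁻¹) (n : ℤ) :
    b ^ n * c = c * b ^ (-n) := by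
  have h : c * b ^ (-n) * c⁻¹ = b ^ n := by rw [← conj_zpow, hcb, inv_zpow', neg_neg]
  rw [← h, inv_mul_cancel_right]

theorem exists_zpow_of_mem_closure_pair (hc : c ^ 2 = 1) (hcb : c * b * c⁻¹ = b⁻¹) {x : G}
    (hx : x ∈ closure {b, c}) : ∃ n : ℤ, x = b ^ n ∨ x = c * b ^ n := by
  have hcc : c * c = 1 := by rwa [← sq]
  have hrel := zpow_mul_eq_mul_zpow_neg_of_conj_eq_inv hcb
  induction hx using closure_induction with
  | mem x hx =>
    rcases hx with rfl | rfl
    · exact ⟨1, .inl (zpow_one x).symm⟩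
    · exact ⟨0, .inr (by rw [zpow_zero, mul_one])⟩
  | one => exact ⟨0, .inl (zpow_zero b).symm⟩
  | mul x y _ _ hx hy =>
    obtain ⟨m, rfl | rfl⟩ := hx <;> obtain ⟨n, rfl | rfl⟩ := hy
    · exact ⟨m + n, .inl (zpow_add b m n).symm⟩
    · exact ⟨-m + n, .inr (by rw [← mul_assoc, hrel, mul_assoc, zpow_add])⟩
    · exact ⟨m + n, .inr (by rw [mul_assoc, zpow_add])⟩
    · refine ⟨-m + n, .inl ?_⟩
      rw [mul_assoc, ← mul_assoc (b ^ m), hrel, ← mul_assoc, ← mul_assoc, hcc, one_mul,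
        zpow_add]
  | inv x _ hx =>
    obtain ⟨m, rfl | rfl⟩ := hx
    · exact ⟨-m, .inl (zpow_neg b m).symm⟩
    · refine ⟨m, .inr ?_⟩
      rw [mul_inv_rev, ← zpow_neg, inv_eq_of_mul_eq_one_right hcc, hrel, neg_neg]

theorem eq_one_of_mem_closure_pair_of_commute (hc : c ^ 2 = 1) (hcb : c * b * c⁻¹ = b⁻¹)
    (hb : ¬IsOfFinOrder b) {z : G} (hz : z ∈ closure {b, c}) (hzb : Commute z b)
    (hzc : Commute z c) : z = 1 := by
  have hinj := injective_zpow_iff_not_isOfFinOrder.mpr hb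
  have hrel := zpow_mul_eq_mul_zpow_neg_of_conj_eq_inv hcb
  obtain ⟨n, rfl | rfl⟩ := exists_zpow_of_mem_closure_pair hc hcb hz
  · have h : b ^ (-n) = b ^ n := mul_left_cancel ((hrel n).symm.trans hzc.eq)
    rw [show n = 0 by have := hinj h; omega, zpow_zero]
  · have hbc : b * c = c * b ^ (-1 : ℤ) := by simpa using hrel 1
    have h : b ^ (n + 1) = b ^ (-1 + n) := by
      have hcomm := hzb.eq
      rw [← mul_assoc, hbc, mul_assoc, mul_assoc] at hcomm
      rw [zpow_add_one, zpow_add]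
      exact mul_left_cancel hcomm
    have := hinj h
    omega

end InfiniteDihedral

section DirectProduct

variable {G : Type*} [Group G]

noncomputable def Subgroup.supEquivProdOfDisjoint {H K : Subgroup G} (hHK : H ≤ centralizer K)
    (hdisj : Disjoint H K) : ↥(H ⊔ K) ≃* H × K :=
  have comm (h : H) (k : K) : Commute (H.subtype h) (K.subtype k) :=
    (mem_centralizer_iff.mp (hHK h.2) k k.2).symm
  have hinj : Function.Injective (MonoidHom.noncommCoprod H.subtype K.subtype comm) :=
    (MonoidHom.noncommCoprod_injective _ _ _).mpr
      ⟨H.subtype_injective, K.subtype_injective, by rwa [range_subtype, range_subtype]⟩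
  (MulEquiv.subgroupCongr
    (by rw [MonoidHom.noncommCoprod_range, range_subtype, range_subtype])).trans
      (MonoidHom.ofInjective hinj).symm

theorem Subgroup.disjoint_zpowers_of_sq_eq_one {a : G} {K : Subgroup G} (ha : a ^ 2 = 1)
    (haK : a ∉ K) : Disjoint (zpowers a) K := by
  rw [disjoint_def]
  intro x hx hxK
  obtain ⟨n, rfl⟩ := mem_zpowers_iff.mp hx
  obtain ⟨k, rfl | rfl⟩ := Int.even_or_odd' n
  · rw [zpow_mul, zpow_ofNat, ha, one_zpow]
  · rw [zpow_add_one, zpow_mul, zpow_ofNat, ha, one_zpow, one_mul] at hxK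
    exact absurd hxK haK

noncomputable def Subgroup.closureInsertEquivProd {a : G} {s : Set G} (ha : a ^ 2 = 1)
    (has : a ∉ closure s) (hcomm : ∀ x ∈ s, Commute a x) :
    closure (insert a s) ≃* closure {a} × closure s :=
  have hle : closure {a} ≤ centralizer (closure s) := by
    rw [centralizer_closure, closure_le, Set.singleton_subset_iff, SetLike.mem_coe,
      mem_centralizer_iff]
    exact fun x hx => (hcomm x hx).eq.symm
  (MulEquiv.subgroupCongr (by rw [Set.insert_eq, closure_union])).trans
    (supEquivProdOfDisjoint hle (zpowers_eq_closure a ▸ disjoint_zpowers_of_sq_eq_one ha has))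

end DirectProduct

theorem Matrix.not_isOfFinOrder_of_map_intCast_eq_smul {n R : Type*} [Fintype n] [DecidableEq n]
    [CommRing R] [CharZero R] {p : ℕ} {M : Matrix n n R} {N : Matrix n n ℤ}
    (hN : N.map (Int.cast : ℤ → R) = (p : R) • M)
    (hNp : ¬IsNilpotent (N.map (Int.cast : ℤ → ZMod p))) : ¬IsOfFinOrder M := by
  intro hM
  obtain ⟨k, hk, hMk⟩ := isOfFinOrder_iff_pow_eq_one.mp hM
  have hNk : N ^ k = ((p ^ k : ℕ) : Matrix n n ℤ) := by
    apply Matrix.map_injective (Int.cast_injective (α := R))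
    change (Int.castRingHom R).mapMatrix (N ^ k) = (Int.castRingHom R).mapMatrix _
    rw [map_pow, map_natCast]
    change N.map Int.cast ^ k = _
    rw [hN, smul_pow, hMk, ← Nat.cast_pow, Nat.cast_smul_eq_nsmul, nsmul_one]
  refine hNp ⟨k, ?_⟩
  change (Int.castRingHom (ZMod p)).mapMatrix N ^ k = 0
  rw [← map_pow, hNk, map_natCast, Nat.cast_pow, ← Matrix.diagonal_natCast, ZMod.natCast_self,
    Matrix.diagonal_zero, zero_pow hk.ne']

namespace SO3Example

open Matrix

noncomputable def A : Matrix (Fin 3) (Fin 3) ℝ := !![1, 0, 0; 0, -1, 0; 0, 0, -1]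

noncomputable def B : Matrix (Fin 3) (Fin 3) ℝ := !![1, 0, 0; 0, -3/5, -4/5; 0, 4/5, -3/5]

noncomputable def C : Matrix (Fin 3) (Fin 3) ℝ := !![-1, 0, 0; 0, 1, 0; 0, 0, -1]

theorem A_mul_self : A * A = 1 := by
  simp [A, one_fin_three]

theorem B_mul_transpose : B * Bᵀ = 1 := by
  ext i j; fin_cases i <;> fin_cases j <;> simp [B, mul_apply, Fin.sum_univ_three] <;> norm_num

theorem C_mul_self : C * C = 1 := by
  simp [C, one_fin_three]

theorem C_mul_B_mul_C_mul_B : C * B * C * B = 1 := by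
  simp [B, C, one_fin_three]; norm_num

theorem A_mul_B : A * B = B * A := by
  simp [A, B]

theorem A_mul_C : A * C = C * A := by
  simp [A, C]

theorem B_mul_C_ne : B * C ≠ C * B := by
  simp [B, C]; norm_num

def fiveB : Matrix (Fin 3) (Fin 3) ℤ := !![5, 0, 0; 0, -3, -4; 0, 4, -3]

theorem map_fiveB : fiveB.map (Int.cast : ℤ → ℝ) = ((5 : ℕ) : ℝ) • B := by
  ext i j; fin_cases i <;> fin_cases j <;> norm_num [fiveB, B]

theorem not_isNilpotent_fiveB_mod_five : ¬IsNilpotent (fiveB.map (Int.cast : ℤ → ZMod 5)) := by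
  have hidem : IsIdempotentElem (-fiveB.map (Int.cast : ℤ → ZMod 5)) := by
    unfold IsIdempotentElem; decide
  have hne : fiveB.map (Int.cast : ℤ → ZMod 5) ≠ 0 := by decide
  exact fun h => hne (neg_eq_zero.mp (hidem.eq_zero_of_isNilpotent h.neg))

noncomputable def a : (Matrix (Fin 3) (Fin 3) ℝ)ˣ := .mkOfMulEqOne A A A_mul_self

noncomputable def b : (Matrix (Fin 3) (Fin 3) ℝ)ˣ := .mkOfMulEqOne B Bᵀ B_mul_transpose

noncomputable def c : (Matrix (Fin 3) (Fin 3) ℝ)ˣ := .mkOfMulEqOne C C C_mul_self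

theorem sq_a : a ^ 2 = 1 := Units.ext (by rw [sq]; exact A_mul_self)

theorem a_ne_one : a ≠ 1 := fun h => by
  have h11 : A 1 1 = (1 : Matrix (Fin 3) (Fin 3) ℝ) 1 1 := congr_arg (fun u => u.val 1 1) h
  norm_num [A] at h11

theorem sq_c : c ^ 2 = 1 := Units.ext (by rw [sq]; exact C_mul_self)

theorem conj_b : c * b * c⁻¹ = b⁻¹ := by
  rw [inv_eq_of_mul_eq_one_right (Units.ext C_mul_self : c * c = 1)]
  exact (inv_eq_of_mul_eq_one_left (Units.ext (by simpa [b, c] using C_mul_B_mul_C_mul_B))).symm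

theorem commute_a_b : Commute a b := Units.ext A_mul_B

theorem commute_a_c : Commute a c := Units.ext A_mul_C

theorem b_mul_c_ne : b * c ≠ c * b := fun h => B_mul_C_ne (congr_arg Units.val h)

theorem not_isOfFinOrder_b : ¬IsOfFinOrder b := by
  rw [← Units.isOfFinOrder_val]
  exact Matrix.not_isOfFinOrder_of_map_intCast_eq_smul map_fiveB not_isNilpotent_fiveB_mod_five

theorem a_notMem_closure_b_c : a ∉ Subgroup.closure {b, c} := fun ha =>
  a_ne_one (eq_one_of_mem_closure_pair_of_commute sq_c conj_b not_isOfFinOrder_b ha commute_a_b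
    commute_a_c)

end SO3Example

open SO3Example in
theorem so3_nonabelian_direct_product_example :
    ∃ a b c : (Matrix (Fin 3) (Fin 3) ℝ)ˣ,
      (a : Matrix (Fin 3) (Fin 3) ℝ) = !![(1 : ℝ), 0, 0; 0, -1, 0; 0, 0, -1] ∧
      (b : Matrix (Fin 3) (Fin 3) ℝ) = !![(1 : ℝ), 0, 0; 0, -3/5, -4/5; 0, 4/5, -3/5] ∧
      (c : Matrix (Fin 3) (Fin 3) ℝ) = !![(-1 : ℝ), 0, 0; 0, 1, 0; 0, 0, -1] ∧
      (¬ ∀ x ∈ Subgroup.closure {a, b, c}, ∀ y ∈ Subgroup.closure {a, b, c}, x * y = y * x) ∧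
      Nat.card (Subgroup.closure ({a} : Set (Matrix (Fin 3) (Fin 3) ℝ)ˣ)) = 2 ∧
      Infinite (Subgroup.closure ({b, c} : Set (Matrix (Fin 3) (Fin 3) ℝ)ˣ)) ∧
      (¬ ∀ x ∈ Subgroup.closure {b, c}, ∀ y ∈ Subgroup.closure {b, c}, x * y = y * x) ∧
      a ∉ Subgroup.closure ({b, c} : Set (Matrix (Fin 3) (Fin 3) ℝ)ˣ) ∧
      Nonempty ((Subgroup.closure ({a, b, c} : Set (Matrix (Fin 3) (Fin 3) ℝ)ˣ)) ≃*
        (Subgroup.closure ({a} : Set (Matrix (Fin 3) (Fin 3) ℝ)ˣ)) ×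
          (Subgroup.closure ({b, c} : Set (Matrix (Fin 3) (Fin 3) ℝ)ˣ))) := by
  refine ⟨a, b, c, rfl, rfl, rfl, ?_, ?_, ?_, ?_, a_notMem_closure_b_c, ?_⟩
  · exact fun h => b_mul_c_ne (h b (subset_closure (by simp)) c (subset_closure (by simp)))
  · rw [← zpowers_eq_closure, Nat.card_zpowers]
    exact orderOf_eq_prime sq_a a_ne_one
  · exact ((infinite_zpowers.mpr not_isOfFinOrder_b).mono
      (zpowers_le.mpr (subset_closure (by simp)))).to_subtype
  · exact fun h => b_mul_c_ne (h b (subset_closure (by simp)) c (subset_closure (by simp)))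
  · refine ⟨closureInsertEquivProd sq_a a_notMem_closure_b_c ?_⟩
    rintro x (rfl | rfl)
    exacts [commute_a_b, commute_a_c]
end
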